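/- arXiv:2303.16440 — 3 statements merged into one kernel-verified Lean document; each statement's English description precedes it below -/
import Mathlib

section
/- Let 𝒢=(V,ℬ,E) be a Borel graph with Δ(𝒢) = Δ < ∞, ℰ its line graph, and ν an ℰ-quasi-invariant Borel probability measure on E whose Radon–Nikodym cocycle satisfies ρ_ν(e,f) ≤ 8Δ for every pair of adjacent edges e,f of the line graph. Suppose c is a partial coloring of 𝒢 that does not admit an improvement of weight L ∈ ℕ, where log_{8Δ}(L)/2 − 1 ≥ 2Δ. Then ν-almost every e ∈ U_c is (log_{8Δ}(L)/4)-bad for c, i.e., every 3-step Vizing chain at e has length at least log_{8Δ}(L)/2 + 2Δ. -/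
open MeasureTheory
open scoped ENNReal

/-- `G` has all vertex degrees at most `Δ`. -/
def DegreeBounded {V : Type} (G : SimpleGraph V) (Δ : ℕ) : Prop :=
  ∀ v : V, ∃ s : Finset V, ↑s = G.neighborSet v ∧ s.card ≤ Δ

/-- The line graph of `G`, on the type `Sym2 V`: two edges of `G` are adjacent
iff they are distinct and share exactly one vertex. -/
def lineGraph {V : Type} (G : SimpleGraph V) : SimpleGraph (Sym2 V) where
  Adj e f := e ∈ G.edgeSet ∧ f ∈ G.edgeSet ∧ e ≠ f ∧ ∃! v, v ∈ e ∧ v ∈ f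
  symm := by
    constructor
    rintro e f ⟨he, hf, hne, v, ⟨hv1, hv2⟩, hu⟩
    exact ⟨hf, he, hne.symm, v, ⟨hv2, hv1⟩, fun w hw => hu w ⟨hw.2, hw.1⟩⟩
  loopless := by constructor; rintro e ⟨_, _, h, _⟩; exact h rfl

/-- A Borel probability measure is quasi-invariant w.r.t. a Borel graph `H` if the
saturation (w.r.t. the connectedness relation of `H`) of every null set is null. -/
def QuasiInvariant {α : Type} [MeasurableSpace α] (H : SimpleGraph α) (μ : Measure α) : Prop :=
  ∀ A : Set α, MeasurableSet A → μ A = 0 → μ {y | ∃ x ∈ A, H.Reachable x y} = 0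

/-- `ρ` is a Radon–Nikodym cocycle of `μ` with respect to the relation `R`:
`μ (g '' C) = ∫⁻ x in C, ρ x (g x) ∂μ` for every Borel injection `g` on a Borel set `C`
whose graph is contained in `R`, and `ρ` takes values in `(0,∞)` on `R`. -/
def IsRNCocycle {α : Type} [MeasurableSpace α] (R : α → α → Prop) (μ : Measure α)
    (ρ : α → α → ℝ≥0∞) : Prop :=
  Measurable (Function.uncurry ρ) ∧
  (∀ x y, R x y → 0 < ρ x y ∧ ρ x y < ⊤) ∧
  ∀ (C : Set α) (g : α → α), MeasurableSet C → Measurable g → Set.InjOn g C →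
    (∀ x ∈ C, R x (g x)) → μ (g '' C) = ∫⁻ x in C, ρ x (g x) ∂μ

/-- A partial proper edge coloring of `G` with `Δ+1` colors. -/
def IsPartialColoring {V : Type} (G : SimpleGraph V) (Δ : ℕ)
    (c : Sym2 V → Option (Fin (Δ + 1))) : Prop :=
  (∀ e, (c e).isSome → e ∈ G.edgeSet) ∧
  ∀ e f : Sym2 V, e ≠ f → (∃ v, v ∈ e ∧ v ∈ f) → (c e).isSome → c e ≠ c f

/-- The set `U_c` of uncolored edges. -/
def uncolored {V : Type} (G : SimpleGraph V) {Δ : ℕ}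
    (c : Sym2 V → Option (Fin (Δ + 1))) : Set (Sym2 V) :=
  {e | e ∈ G.edgeSet ∧ c e = none}

/-- The set `m_c(x)` of colors missing at the vertex `x`. -/
def missing {V : Type} (G : SimpleGraph V) {Δ : ℕ}
    (c : Sym2 V → Option (Fin (Δ + 1))) (x : V) : Set (Fin (Δ + 1)) :=
  {γ | ∀ e ∈ G.edgeSet, x ∈ e → c e ≠ some γ}

/-- `γ` is the minimal color missing at `x`. -/
def IsMinMissing {V : Type} (G : SimpleGraph V) {Δ : ℕ}
    (c : Sym2 V → Option (Fin (Δ + 1))) (x : V) (γ : Fin (Δ + 1)) : Prop :=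
  γ ∈ missing G c x ∧ ∀ δ ∈ missing G c x, γ ≤ δ

/-- A (finite or infinite) sequence of edges, encoded as a function `ℕ → Option (Sym2 V)`
which, once `none`, stays `none`. -/
structure EChain (V : Type) where
  seq : ℕ → Option (Sym2 V)
  closed : ∀ n, seq n = none → seq (n + 1) = none

namespace EChain

variable {V : Type}

/-- An edge occurs in the chain. -/
def mem (P : EChain V) (e : Sym2 V) : Prop := ∃ n, P.seq n = some e

/-- The empty chain. -/
protected def empty : EChain V := ⟨fun _ => none, fun _ _ => rfl⟩

def IsEmptyC (P : EChain V) : Prop := P.seq 0 = none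

/-- Consecutive edges intersect. -/
def IsChainSeq (P : EChain V) : Prop :=
  ∀ n e f, P.seq n = some e → P.seq (n + 1) = some f → ∃ v, v ∈ e ∧ v ∈ f

/-- Every edge appears at most once. -/
def EdgeInj (P : EChain V) : Prop :=
  ∀ m n e, P.seq m = some e → P.seq n = some e → m = n

/-- `P ⊑ Q`: `P` is a prefix of `Q`. -/
def IsPrefix (P Q : EChain V) : Prop := ∀ n e, P.seq n = some e → Q.seq n = some e

/-- `P` has exactly `k` edges. -/
def lenEq (P : EChain V) (k : ℕ) : Prop := P.seq k = none ∧ ∀ n < k, (P.seq n).isSome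

/-- `P` is infinite. -/
protected def Infinite (P : EChain V) : Prop := ∀ n, (P.seq n).isSome

/-- The prefix of `P` consisting of its first `j` edges. -/
def take (P : EChain V) (j : ℕ) : EChain V where
  seq n := if n < j then P.seq n else none
  closed := by
    intro n h
    show (if n + 1 < j then P.seq (n + 1) else none) = none
    have h' : (if n < j then P.seq n else none) = none := h
    by_cases h1 : n + 1 < j
    · have h0 : n < j := by omega
      rw [if_pos h0] at h'
      rw [if_pos h1]
      exact P.closed n h'
    · rw [if_neg h1]

/-- Concatenation of chains (if `P` is infinite the result is `P`). -/
noncomputable def append (P Q : EChain V) : EChain V := by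
  classical
  exact
    { seq := fun n =>
        if h : ∃ k, P.seq k = none then
          (if n < Nat.find h then P.seq n else Q.seq (n - Nat.find h))
        else P.seq n
      closed := by
        intro n hn
        have hn' : (if h : ∃ k, P.seq k = none then
            (if n < Nat.find h then P.seq n else Q.seq (n - Nat.find h))
          else P.seq n) = none := hn
        show (if h : ∃ k, P.seq k = none then
            (if n + 1 < Nat.find h then P.seq (n + 1) else Q.seq (n + 1 - Nat.find h))
          else P.seq (n + 1)) = none
        by_cases h : ∃ k, P.seq k = none
        · rw [dif_pos h] at hn' ⊢
          by_cases hnm : n < Nat.find h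
          · rw [if_pos hnm] at hn'
            exact absurd hn' (Nat.find_min h hnm)
          · rw [if_neg hnm] at hn'
            rw [if_neg (by omega : ¬ n + 1 < Nat.find h)]
            rw [show n + 1 - Nat.find h = (n - Nat.find h) + 1 from by omega]
            exact Q.closed _ hn'
        · rw [dif_neg h] at hn' ⊢
          exact P.closed n hn' }

/-- The shift `c_P` of a partial coloring `c` along a chain `P`: each edge of `P`
receives the color of the following edge of `P` (the last edge becomes uncolored),
and edges off `P` keep their colors. -/
noncomputable def shift {Δ : ℕ} (P : EChain V) (c : Sym2 V → Option (Fin (Δ + 1))) :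
    Sym2 V → Option (Fin (Δ + 1)) := by
  classical
  exact fun e =>
    if h : ∃ n, P.seq n = some e then (P.seq (Nat.find h + 1)).bind c else c e

/-- `y` is the last vertex of the (finite) chain `P` started at `x`: if `P` is empty
then `y = x`, otherwise `y ≠ x` belongs to exactly one edge of `P`. -/
def IsLastVertexOf (P : EChain V) (x y : V) : Prop :=
  (P.seq 0 = none ∧ y = x) ∨
  (P.seq 0 ≠ none ∧ y ≠ x ∧ (∃ n e, P.seq n = some e ∧ y ∈ e) ∧
    ∀ m n e f, P.seq m = some e → P.seq n = some f → y ∈ e → y ∈ f → m = n)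

end EChain

/-- `P` is `c`-shiftable: a nonempty edge-injective chain of edges of `G` whose first
edge is uncolored and all other edges are colored. -/
structure IsShiftable {V : Type} (G : SimpleGraph V) (Δ : ℕ)
    (c : Sym2 V → Option (Fin (Δ + 1))) (P : EChain V) : Prop where
  chain : P.IsChainSeq
  edges : ∀ n e, P.seq n = some e → e ∈ G.edgeSet
  inj : P.EdgeInj
  first : ∃ e, P.seq 0 = some e ∧ c e = none
  rest : ∀ n e, P.seq (n + 1) = some e → (c e).isSome

/-- `P` is `c`-proper-shiftable: the shift of `c` along `P` is again a proper
partial coloring. -/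
def IsProperShiftable {V : Type} (G : SimpleGraph V) (Δ : ℕ)
    (c : Sym2 V → Option (Fin (Δ + 1))) (P : EChain V) : Prop :=
  IsShiftable G Δ c P ∧ IsPartialColoring G Δ (P.shift c)

/-- `P` is `c`-augmenting: `c`-proper-shiftable and either infinite or the endpoints
of its last edge have a common missing color after the shift. -/
def IsAugmenting {V : Type} (G : SimpleGraph V) (Δ : ℕ)
    (c : Sym2 V → Option (Fin (Δ + 1))) (P : EChain V) : Prop :=
  IsProperShiftable G Δ c P ∧
    (P.Infinite ∨ ∃ n e, P.seq n = some e ∧ P.seq (n + 1) = none ∧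
      ∃ γ : Fin (Δ + 1), ∀ v ∈ e, γ ∈ missing G (P.shift c) v)

/-- `P` is the maximal alternating `α/β`-path `P_c(x, α/β)` starting at `x`. -/
structure IsAltPath {V : Type} (G : SimpleGraph V) {Δ : ℕ}
    (c : Sym2 V → Option (Fin (Δ + 1))) (x : V) (α β : Fin (Δ + 1))
    (P : EChain V) : Prop where
  ne : α ≠ β
  startMissing : β ∈ missing G c x
  edges : ∀ n e, P.seq n = some e → e ∈ G.edgeSet
  chain : P.IsChainSeq
  inj : P.EdgeInj
  start : ∀ e, P.seq 0 = some e → x ∈ e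
  noback : ∀ e, P.seq 1 = some e → x ∉ e
  colors : ∀ n e, P.seq n = some e → c e = some (if n % 2 = 0 then α else β)
  maximal : ∀ k, P.lenEq k → ∀ y, P.IsLastVertexOf x y →
    ∀ f ∈ G.edgeSet, y ∈ f → c f ≠ some (if k % 2 = 0 then α else β)

/-- `F` is the maximal fan `F_c(x, e)` around `x` starting at the uncolored edge `e`. -/
structure IsMaxFan {V : Type} (G : SimpleGraph V) {Δ : ℕ}
    (c : Sym2 V → Option (Fin (Δ + 1))) (x : V) (e : Sym2 V) (F : EChain V) : Prop where
  first : F.seq 0 = some e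
  finite : ∃ k, F.seq k = none
  atx : ∀ n f, F.seq n = some f → x ∈ f ∧ f ∈ G.edgeSet
  inj : F.EdgeInj
  step : ∀ n f g, F.seq n = some f → F.seq (n + 1) = some g →
    ∀ v ∈ f, v ≠ x → ∃ γ, IsMinMissing G c v γ ∧ c g = some γ
  maximal : ∀ n f, F.seq n = some f → F.seq (n + 1) = none →
    ∀ v ∈ f, v ≠ x → ∀ γ, IsMinMissing G c v γ →
      ∀ g ∈ G.edgeSet, x ∈ g → c g = some γ → F.mem g

/-- `F` is the maximal `α/β`-conditional fan `F_c(·, α/β, y)` around `y`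
starting at the edge `f₀`. -/
structure IsMaxCondFan {V : Type} (G : SimpleGraph V) {Δ : ℕ}
    (c : Sym2 V → Option (Fin (Δ + 1))) (α β : Fin (Δ + 1)) (y : V) (f₀ : Sym2 V)
    (F : EChain V) : Prop where
  first : F.seq 0 = some f₀
  finite : ∃ k, F.seq k = none
  aty : ∀ n f, F.seq n = some f → y ∈ f ∧ f ∈ G.edgeSet
  inj : F.EdgeInj
  step : ∀ n f g, F.seq n = some f → F.seq (n + 1) = some g →
    ∀ v ∈ f, v ≠ y → ∃ γ, IsMinMissing G c v γ ∧ c g = some γ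
  cond : ∀ n f, F.seq n = some f → (F.seq (n + 1)).isSome →
    ∀ v ∈ f, v ≠ y → α ∉ missing G c v ∧ β ∉ missing G c v
  maximal : ∀ n f, F.seq n = some f → F.seq (n + 1) = none →
    ∀ v ∈ f, v ≠ y → (α ∉ missing G c v ∧ β ∉ missing G c v) →
      ∀ γ, IsMinMissing G c v γ →
        ∀ g ∈ G.edgeSet, y ∈ g → c g = some γ → F.mem g

/-- A decomposition of a `3`-step Vizing chain at the uncolored edge `e`:
`(F¹)⌢(P¹)⌢(F²)⌢(P²)⌢(F³)⌢(P³)` where `F¹ ⊑ F_c(y₁,e)`, `F² ⊑ F_c(z₁,α₁/β₁,y₂)`,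
`F³ ⊑ F_c(z₂,α₂/β₂,y₃)`, `Pⁱ ⊑ P_c(z_i,α_i/β_i)`, the anchor vertices are pairwise
distinct, any segment after an empty segment is empty, and the concatenation is a
`c`-augmenting chain starting at `e`. -/
structure VizingDecomp {V : Type} (G : SimpleGraph V) (Δ : ℕ)
    (c : Sym2 V → Option (Fin (Δ + 1))) (e : Sym2 V)
    (y₁ y₂ y₃ z₁ z₂ z₃ : V) (α₁ β₁ α₂ β₂ α₃ β₃ : Fin (Δ + 1))
    (F1 P1 F2 P2 F3 P3 : EChain V) : Prop where
  uncoloredEdge : e ∈ G.edgeSet ∧ c e = none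
  distinct : List.Pairwise (· ≠ ·) [y₁, y₂, y₃, z₁, z₂, z₃]
  prefF1 : ∃ MF, IsMaxFan G c y₁ e MF ∧ F1.IsPrefix MF
  prefP1 : ∃ Q, IsAltPath G c z₁ α₁ β₁ Q ∧ P1.IsPrefix Q
  prefF2 : ∃ f MF, IsMaxCondFan G c α₁ β₁ y₂ f MF ∧ F2.IsPrefix MF
  prefP2 : ∃ Q, IsAltPath G c z₂ α₂ β₂ Q ∧ P2.IsPrefix Q
  prefF3 : ∃ f MF, IsMaxCondFan G c α₂ β₂ y₃ f MF ∧ F3.IsPrefix MF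
  prefP3 : ∃ Q, IsAltPath G c z₃ α₃ β₃ Q ∧ P3.IsPrefix Q
  tail1 : F1.IsEmptyC → P1.IsEmptyC
  tail2 : P1.IsEmptyC → F2.IsEmptyC
  tail3 : F2.IsEmptyC → P2.IsEmptyC
  tail4 : P2.IsEmptyC → F3.IsEmptyC
  tail5 : F3.IsEmptyC → P3.IsEmptyC
  firstEdge : (F1.append (P1.append (F2.append (P2.append (F3.append P3))))).seq 0 = some e
  aug : IsAugmenting G Δ c (F1.append (P1.append (F2.append (P2.append (F3.append P3)))))

/-- `W` is a `3`-step Vizing chain at the uncolored edge `e`. -/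
def IsVizingChain3 {V : Type} (G : SimpleGraph V) (Δ : ℕ)
    (c : Sym2 V → Option (Fin (Δ + 1))) (e : Sym2 V) (W : EChain V) : Prop :=
  ∃ (y₁ y₂ y₃ z₁ z₂ z₃ : V) (α₁ β₁ α₂ β₂ α₃ β₃ : Fin (Δ + 1))
    (F1 P1 F2 P2 F3 P3 : EChain V),
    VizingDecomp G Δ c e y₁ y₂ y₃ z₁ z₂ z₃ α₁ β₁ α₂ β₂ α₃ β₃ F1 P1 F2 P2 F3 P3 ∧
    W = F1.append (P1.append (F2.append (P2.append (F3.append P3))))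

/-- `e` is `K`-bad for `c`: every `3`-step Vizing chain at `e` has length at least
`2K + 2Δ`. -/
def KBad {V : Type} (G : SimpleGraph V) (Δ : ℕ)
    (c : Sym2 V → Option (Fin (Δ + 1))) (K : ℕ) (e : Sym2 V) : Prop :=
  ∀ W, IsVizingChain3 G Δ c e W → ∀ n < 2 * K + 2 * Δ, (W.seq n).isSome

/-- The weight `Σ_{f ∈ W} ρ(e, f)` of a chain `W` relative to `e`. -/
noncomputable def chainWeight {V : Type} (ρ : Sym2 V → Sym2 V → ℝ≥0∞)
    (e : Sym2 V) (W : EChain V) : ℝ≥0∞ :=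
  ∑' n, (W.seq n).elim 0 (fun f => ρ e f)

/-- `c` (Borel, with cocycle `ρ` of `ν`) does not admit an improvement of weight `L`. -/
def NoImprovement {V : Type} [MeasurableSpace V] (G : SimpleGraph V) (Δ : ℕ)
    (ν : Measure (Sym2 V)) (ρ : Sym2 V → Sym2 V → ℝ≥0∞)
    (c : Sym2 V → Option (Fin (Δ + 1))) (L : ℕ) : Prop :=
  ν {e | e ∈ G.edgeSet ∧ c e = none ∧
      ∃ W, IsVizingChain3 G Δ c e W ∧ chainWeight ρ e W ≤ (L : ℝ≥0∞)} = 0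

/-- `c` is a Borel partial coloring: preimages of colors are Borel. -/
def MeasurableColoring {V : Type} [MeasurableSpace V] {Δ : ℕ}
    (c : Sym2 V → Option (Fin (Δ + 1))) : Prop :=
  ∀ o : Option (Fin (Δ + 1)), MeasurableSet {e | c e = o}

/-- Edges `e`, `f` have distance at least `k` in the line graph of `G`. -/
noncomputable def edgeDistGE {V : Type} (G : SimpleGraph V) (e f : Sym2 V) (k : ℕ) : Prop :=
  ¬ (lineGraph G).Reachable e f ∨ k ≤ (lineGraph G).dist e f

/-- The pairs `(f¹, f²)` of colored edges that are the first edges of the segments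
`F²`, `F³` of some `3`-step Vizing chain at `e`. -/
def VizingPair {V : Type} (G : SimpleGraph V) (Δ : ℕ)
    (c : Sym2 V → Option (Fin (Δ + 1))) (e : Sym2 V) (p : Sym2 V × Sym2 V) : Prop :=
  (c p.1).isSome ∧ (c p.2).isSome ∧
  ∃ (y₁ y₂ y₃ z₁ z₂ z₃ : V) (α₁ β₁ α₂ β₂ α₃ β₃ : Fin (Δ + 1))
    (F1 P1 F2 P2 F3 P3 : EChain V),
    VizingDecomp G Δ c e y₁ y₂ y₃ z₁ z₂ z₃ α₁ β₁ α₂ β₂ α₃ β₃ F1 P1 F2 P2 F3 P3 ∧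
    F2.seq 0 = some p.1 ∧ F3.seq 0 = some p.2

/-!
The line graph of `G` is a Borel graph of degree at most `2Δ` on the standard Borel space
`Sym2 V`, so by the Lusin–Souslin theorem its adjacency is covered by countably many Borel partial
injections, and every walk of length `n` starting at `e` is traced by a composite `g` of `n` of
them. On a piece `B` where `ρ(x, g x) > (8Δ)^(n+1)`, the cocycle identity gives
`(8Δ)^(n+1) ν(B) ≤ ν(g '' B) ≤ (8Δ)^n ν(B)`, so `B` is null: for `ν`-a.e. `e`,
`ρ(e, f) ≤ (8Δ)^(n+1)` whenever `f` is reached from `e` by a walk of length `n`. A Vizing chain at such an `e` with fewer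
than `log_{8Δ} L / 2 + 2Δ ≤ log_{8Δ} L - 1` edges then has weight at most
`∑_{n<k} (8Δ)^(n+1) ≤ (8Δ)^(k+1) ≤ L`, i.e. it is an improvement of weight `L`, and those occur
only on a null set.
-/

open Set

theorem MeasurableEmbedding.standardBorelSpace {α β : Type*} [MeasurableSpace α]
    [MeasurableSpace β] [StandardBorelSpace β] {f : α → β} (hf : MeasurableEmbedding f) :
    StandardBorelSpace α := by
  have := hf.measurableSet_range.standardBorel
  let := upgradeStandardBorel (range f)
  let : TopologicalSpace α := .induced hf.equivRange inferInstance
  refine ⟨inferInstance, ⟨?_⟩, hf.equivRange.toEquiv.polishSpace_induced⟩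
  rw [borel_comap, ← BorelSpace.measurable_eq]
  exact hf.equivRange.measurableEmbedding.comap_eq.symm

theorem Sym2.measurableEmbedding_inf_sup {V : Type*} [MeasurableSpace V] [LinearOrder V]
    (hle : MeasurableSet {p : V × V | p.1 ≤ p.2}) :
    MeasurableEmbedding fun e : Sym2 V => (e.inf, e.sup) := by
  refine .of_measurable_inverse (g := fun p : V × V => s(p.1, p.2)) ?_ ?_ (fun _ hs => hs) ?_
  · change Measurable fun p : V × V => (min p.1 p.2, max p.1 p.2)
    simp only [min_def, max_def]
    exact (measurable_fst.ite hle measurable_snd).prodMk (measurable_snd.ite hle measurable_fst)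
  · convert hle
    ext p
    exact ⟨by rintro ⟨e, rfl⟩; exact e.inf_le_sup,
      fun h : p.1 ≤ p.2 => ⟨s(p.1, p.2), Prod.ext (by simp [h]) (by simp [h])⟩⟩
  · exact fun e => Sym2.sortEquiv.symm_apply_apply e

instance Sym2.standardBorelSpace {V : Type*} [MeasurableSpace V] [StandardBorelSpace V] :
    StandardBorelSpace (Sym2 V) :=
  let : LinearOrder V := .lift' (embeddingReal V) (measurableEmbedding_embeddingReal V).injective
  (Sym2.measurableEmbedding_inf_sup (show MeasurableSet
    {p : V × V | embeddingReal V p.1 ≤ embeddingReal V p.2} from measurableSet_le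
      ((measurable_embeddingReal V).comp measurable_fst)
      ((measurable_embeddingReal V).comp measurable_snd))).standardBorelSpace

theorem Sym2.eq_of_mem_of_mem_of_ne {V : Type*} {e f : Sym2 V} (hef : e ≠ f) {u v : V}
    (hue : u ∈ e) (huf : u ∈ f) (hve : v ∈ e) (hvf : v ∈ f) : u = v := by
  by_contra huv
  exact hef (((Sym2.mem_and_mem_iff huv).mp ⟨hue, hve⟩).trans
    ((Sym2.mem_and_mem_iff huv).mp ⟨huf, hvf⟩).symm)

theorem lineGraph_adj_iff {V : Type} {G : SimpleGraph V} {e f : Sym2 V} :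
    (lineGraph G).Adj e f ↔ e ∈ G.edgeSet ∧ f ∈ G.edgeSet ∧ e ≠ f ∧ ∃ v, v ∈ e ∧ v ∈ f :=
  ⟨fun ⟨he, hf, hef, v, hv, _⟩ => ⟨he, hf, hef, v, hv⟩, fun ⟨he, hf, hef, v, hv⟩ =>
    ⟨he, hf, hef, v, hv, fun _ hw => Sym2.eq_of_mem_of_mem_of_ne hef hw.1 hw.2 hv.1 hv.2⟩⟩

theorem lineGraph_adj_eq_inter_image {V : Type} (G : SimpleGraph V) :
    {p : Sym2 V × Sym2 V | (lineGraph G).Adj p.1 p.2} = G.edgeSet ×ˢ G.edgeSet ∩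
      (fun q : V × V × V => (s(q.1, q.2.1), s(q.1, q.2.2))) '' {q | q.2.1 ≠ q.2.2} := by
  ext ⟨e, f⟩
  simp only [mem_ofPred_eq, lineGraph_adj_iff, mem_inter_iff, mem_prod, mem_image, Prod.mk.injEq]
  constructor
  · rintro ⟨he, hf, hef, v, hve, hvf⟩
    obtain ⟨a, rfl⟩ := Sym2.mem_iff_exists.mp hve
    obtain ⟨b, rfl⟩ := Sym2.mem_iff_exists.mp hvf
    exact ⟨⟨he, hf⟩, (v, a, b), fun hab : a = b => hef (hab ▸ rfl), rfl, rfl⟩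
  · rintro ⟨⟨he, hf⟩, ⟨v, a, b⟩, hab, rfl, rfl⟩
    exact ⟨he, hf, fun h => hab (Sym2.congr_right.mp h), v, Sym2.mem_mk_left v a,
      Sym2.mem_mk_left v b⟩

theorem measurableSet_lineGraph_adj {V : Type} [MeasurableSpace V] [StandardBorelSpace V]
    {G : SimpleGraph V} (hE : MeasurableSet G.edgeSet) :
    MeasurableSet {p : Sym2 V × Sym2 V | (lineGraph G).Adj p.1 p.2} := by
  rw [lineGraph_adj_eq_inter_image]
  refine (hE.prod hE).inter (MeasurableSet.image_of_measurable_injOn ?_ ?_ ?_)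
  · exact (measurableSet_eq_fun (by fun_prop) (by fun_prop)).compl
  · fun_prop
  · rintro ⟨v, a, b⟩ hab ⟨v', a', b'⟩ - h
    simp only [Prod.mk.injEq] at h
    obtain ⟨ha, hb⟩ := h
    have hvv' : v = v' := Sym2.eq_of_mem_of_mem_of_ne (fun h => hab (Sym2.congr_right.mp h))
      (Sym2.mem_mk_left v a) (Sym2.mem_mk_left v b) (ha ▸ Sym2.mem_mk_left v' a')
      (hb ▸ Sym2.mem_mk_left v' b')
    subst hvv'
    rw [Sym2.congr_right.mp ha, Sym2.congr_right.mp hb]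

theorem Set.range_eq_of_strictMono_of_card_le {β : Type*} [LinearOrder β] {s : Finset β} {n : ℕ}
    (hs : s.card ≤ n) {f : Fin n → β} (hf : StrictMono f) (hfs : ∀ i, f i ∈ s) :
    Set.range f = s := by
  have himage : Finset.univ.image f = s :=
    Finset.eq_of_subset_of_card_le (by simpa [Finset.subset_iff] using hfs)
      (by rw [Finset.card_image_of_injective _ hf.injective]; simpa using hs)
  rw [← himage, Finset.coe_image, Finset.coe_univ, image_univ]

theorem exists_measurable_eq_of_injOn_fst {X Y : Type*} [MeasurableSpace X] [StandardBorelSpace X]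
    [MeasurableSpace Y] [StandardBorelSpace Y] {Γ : Set (X × Y)} (hΓ : MeasurableSet Γ)
    (hinj : InjOn Prod.fst Γ) {u₀ : X → Y} (hu₀ : Measurable u₀) :
    ∃ u : X → Y, Measurable u ∧ ∀ p ∈ Γ, u p.1 = p.2 := by
  have := hΓ.standardBorel
  have hf : MeasurableEmbedding fun p : Γ => p.1.1 :=
    (measurable_fst.comp measurable_subtype_coe).measurableEmbedding
      fun p q h => Subtype.ext (hinj p.2 q.2 h)
  exact ⟨Function.extend (fun p : Γ => p.1.1) (fun p => p.1.2) u₀,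
    hf.measurable_extend (measurable_snd.comp measurable_subtype_coe) hu₀,
    fun p hp => hf.injective.extend_apply _ _ ⟨p, hp⟩⟩

structure BorelCover {X : Type*} [MeasurableSpace X] (A : Set (X × X)) where
  dom : ℕ → Set X
  map : ℕ → X → X
  measurableSet_dom : ∀ i, MeasurableSet (dom i)
  measurable_map : ∀ i, Measurable (map i)
  mem : ∀ i, ∀ x ∈ dom i, (x, map i x) ∈ A
  exists_eq : ∀ x y, (x, y) ∈ A → ∃ i, x ∈ dom i ∧ map i x = y

namespace BorelCover

variable {X : Type*} [MeasurableSpace X]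

def union {A B : Set (X × X)} (C : BorelCover A) (D : BorelCover B) : BorelCover (A ∪ B) where
  dom i := Sum.elim C.dom D.dom (Equiv.natSumNatEquivNat.symm i)
  map i := Sum.elim C.map D.map (Equiv.natSumNatEquivNat.symm i)
  measurableSet_dom i := by
    cases Equiv.natSumNatEquivNat.symm i
    exacts [C.measurableSet_dom _, D.measurableSet_dom _]
  measurable_map i := by
    cases Equiv.natSumNatEquivNat.symm i
    exacts [C.measurable_map _, D.measurable_map _]
  mem i x := by
    cases Equiv.natSumNatEquivNat.symm i
    exacts [fun hx => Or.inl (C.mem _ x hx), fun hx => Or.inr (D.mem _ x hx)]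
  exists_eq x y := by
    rintro (hxy | hxy)
    · obtain ⟨i, hi⟩ := C.exists_eq x y hxy
      exact ⟨Equiv.natSumNatEquivNat (.inl i), by simpa using hi⟩
    · obtain ⟨i, hi⟩ := D.exists_eq x y hxy
      exact ⟨Equiv.natSumNatEquivNat (.inr i), by simpa using hi⟩

def ofEnum {A : Set (X × X)} {D : Set X} (hD : MeasurableSet D) {n : ℕ} [NeZero n]
    {u : X → Fin n → X} (hu : Measurable u) (hA : ∀ x ∈ D, range (u x) = {y | (x, y) ∈ A}) :
    BorelCover (A ∩ D ×ˢ univ) where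
  dom _ := D
  map i x := u x (Fin.ofNat n i)
  measurableSet_dom _ := hD
  measurable_map i := (measurable_pi_apply _).comp hu
  mem i x hx := ⟨(hA x hx).subset (mem_range_self _), hx, trivial⟩
  exists_eq x y := by
    rintro ⟨hxy, hx, -⟩
    obtain ⟨j, rfl⟩ := (hA x hx).superset hxy
    exact ⟨j, hx, by rw [Fin.ofNat_val_eq_self]⟩

theorem nonempty_of_linearOrder [StandardBorelSpace X] [LinearOrder X] (hlt : MeasurableSet {p : X × X | p.1 < p.2})
    {N : ℕ} {A : Set (X × X)} (hA : MeasurableSet A)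
    (hN : ∀ x, ∃ F : Finset X, {y | (x, y) ∈ A} ⊆ F ∧ F.card ≤ N) : Nonempty (BorelCover A) := by
  classical
  induction N generalizing A with
  | zero =>
    refine ⟨⟨fun _ => ∅, fun _ => id, fun _ => .empty, fun _ => measurable_id,
      fun _ _ h => h.elim, fun x y hxy => ?_⟩⟩
    obtain ⟨F, hF, hcard⟩ := hN x
    simpa [Finset.card_eq_zero.mp (Nat.le_zero.mp hcard)] using hF hxy
  | succ k ih =>
    -- the increasing enumerations of the sections of `A` of maximal size `k + 1`
    set T : Set (X × (Fin (k + 1) → X)) := {p | (∀ i, (p.1, p.2 i) ∈ A) ∧ StrictMono p.2}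
      with hTdef
    have hT : MeasurableSet T := by
      simp only [hTdef, Fin.strictMono_iff_lt_succ, ofPred_and, ofPred_forall]
      exact (MeasurableSet.iInter fun i => hA.preimage (by fun_prop)).inter
        (MeasurableSet.iInter fun i =>
          hlt.preimage (f := fun p : X × (Fin (k + 1) → X) => (p.2 i.castSucc, p.2 i.succ))
            (by fun_prop))
    have hrange : ∀ p ∈ T, Set.range p.2 = {y | (p.1, y) ∈ A} := by
      rintro ⟨x, t⟩ ⟨htA, ht⟩
      obtain ⟨F, hF, hcard⟩ := hN x
      refine Subset.antisymm (by rintro _ ⟨i, rfl⟩; exact htA i) ?_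
      rw [Set.range_eq_of_strictMono_of_card_le hcard ht fun i => hF (htA i)]
      exact hF
    have hinj : InjOn Prod.fst T := fun p hp q hq h =>
      Prod.ext h ((hp.2.range_inj hq.2).mp (by rw [hrange p hp, hrange q hq, h]))
    obtain ⟨u, hu, huT⟩ := exists_measurable_eq_of_injOn_fst hT hinj
      (u₀ := fun x _ => x) (measurable_pi_lambda _ fun _ => measurable_id)
    set X₁ := Prod.fst '' T
    have hX₁ : MeasurableSet X₁ := hT.image_of_measurable_injOn measurable_fst hinj
    have hsmall : ∀ x ∉ X₁, ∃ F : Finset X, {y | (x, y) ∈ A} ⊆ F ∧ F.card ≤ k := by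
      intro x hx
      obtain ⟨F, hF, -⟩ := hN x
      refine ⟨F.filter fun y => (x, y) ∈ A, fun y hy => by simpa using ⟨hF hy, hy⟩,
        not_lt.mp fun hk => hx ?_⟩
      let t := (F.filter fun y => (x, y) ∈ A).orderEmbOfCardLe hk
      exact ⟨(x, t), ⟨fun i => (Finset.mem_filter.mp (Finset.orderEmbOfCardLe_mem _ hk i)).2,
        t.strictMono⟩, rfl⟩
    obtain ⟨C⟩ := ih (A := A \ X₁ ×ˢ univ) (hA.diff (hX₁.prod .univ)) fun x => by
      by_cases hx : x ∈ X₁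
      · exact ⟨∅, fun y hy => (hy.2 ⟨hx, trivial⟩).elim, by simp⟩
      · obtain ⟨F, hF, hcard⟩ := hsmall x hx
        exact ⟨F, fun y hy => hF hy.1, hcard⟩
    have D := ofEnum hX₁ hu (A := A) <| by
      rintro _ ⟨p, hp, rfl⟩
      rw [huT p hp, hrange p hp]
    rw [← inter_union_sdiff A (X₁ ×ˢ univ)]
    exact ⟨D.union C⟩

theorem nonempty_of_card_le [StandardBorelSpace X] {N : ℕ} {A : Set (X × X)} (hA : MeasurableSet A)
    (hN : ∀ x, ∃ F : Finset X, {y | (x, y) ∈ A} ⊆ F ∧ F.card ≤ N) : Nonempty (BorelCover A) :=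
  let : LinearOrder X := .lift' (embeddingReal X) (measurableEmbedding_embeddingReal X).injective
  nonempty_of_linearOrder (show MeasurableSet
    {p : X × X | embeddingReal X p.1 < embeddingReal X p.2} from measurableSet_lt
      ((measurable_embeddingReal X).comp measurable_fst)
      ((measurable_embeddingReal X).comp measurable_snd)) hA hN

end BorelCover

section Cocycle

variable {α : Type} [MeasurableSpace α] {R : α → α → Prop} {μ : Measure α} {ρ : α → α → ℝ≥0∞}
  {C : Set α} {g : α → α}

theorem IsRNCocycle.measure_image_le (hρ : IsRNCocycle R μ ρ) (hC : MeasurableSet C)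
    (hg : Measurable g) (hinj : InjOn g C) (hR : ∀ x ∈ C, R x (g x)) {κ : ℝ≥0∞}
    (hκ : ∀ x ∈ C, ρ x (g x) ≤ κ) {D : Set α} (hD : D ⊆ C) : μ (g '' D) ≤ κ * μ D := by
  set D' := toMeasurable μ D ∩ C
  have hD' : MeasurableSet D' := (measurableSet_toMeasurable μ D).inter hC
  calc μ (g '' D) ≤ μ (g '' D') :=
        measure_mono (image_mono fun x hx => ⟨subset_toMeasurable μ D hx, hD hx⟩)
    _ = ∫⁻ x in D', ρ x (g x) ∂μ :=
        hρ.2.2 D' g hD' hg (hinj.mono inter_subset_right) fun x hx => hR x hx.2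
    _ ≤ ∫⁻ _ in D', κ ∂μ := setLIntegral_mono' hD' fun x hx => hκ x hx.2
    _ = κ * μ D' := setLIntegral_const D' κ
    _ ≤ κ * μ D :=
        mul_le_mul_right ((measure_mono inter_subset_left).trans (measure_toMeasurable D).le) κ

theorem IsRNCocycle.mul_measure_le_measure_image (hρ : IsRNCocycle R μ ρ) (hC : MeasurableSet C)
    (hg : Measurable g) (hinj : InjOn g C) (hR : ∀ x ∈ C, R x (g x)) {t : ℝ≥0∞}
    (ht : ∀ x ∈ C, t ≤ ρ x (g x)) : t * μ C ≤ μ (g '' C) := by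
  rw [hρ.2.2 C g hC hg hinj hR, ← setLIntegral_const]
  exact setLIntegral_mono' hC ht

end Cocycle

structure BorelAdjCover {X : Type*} [MeasurableSpace X] (H : SimpleGraph X) extends
    BorelCover {p : X × X | H.Adj p.1 p.2} where
  injOn : ∀ i, InjOn (map i) (dom i)

namespace BorelAdjCover

variable {X : Type} [MeasurableSpace X] {H : SimpleGraph X}

theorem nonempty [StandardBorelSpace X] (hH : MeasurableSet {p : X × X | H.Adj p.1 p.2}) {N : ℕ}
    (hN : ∀ x, ∃ F : Finset X, H.neighborSet x ⊆ F ∧ F.card ≤ N) :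
    Nonempty (BorelAdjCover H) := by
  obtain ⟨C⟩ := BorelCover.nonempty_of_card_le hH hN
  -- restrict `C.map i` to where `C.map r` undoes it; `j` encodes the pair `(i, r)`
  refine ⟨{
    dom := fun j => C.dom j.unpair.1 ∩ {x | C.map j.unpair.2 (C.map j.unpair.1 x) = x}
    map := fun j => C.map j.unpair.1
    measurableSet_dom := fun j => (C.measurableSet_dom _).inter
      (measurableSet_eq_fun ((C.measurable_map _).comp (C.measurable_map _)) measurable_id)
    measurable_map := fun j => C.measurable_map _
    mem := fun j x hx => C.mem _ x hx.1
    exists_eq := fun x y hxy => ?_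
    injOn := fun j x hx y hy h => by rw [← hx.2, h, hy.2] }⟩
  obtain ⟨r, -, hr⟩ := C.exists_eq y x (show H.Adj x y from hxy).symm
  obtain ⟨i, hxi, rfl⟩ := C.exists_eq x y hxy
  exact ⟨Nat.pair i r, by simpa [Nat.unpair_pair] using ⟨hxi, hr⟩, by simp [Nat.unpair_pair]⟩

variable (S : BorelAdjCover H)

def wordDom : List ℕ → Set X
  | [] => univ
  | i :: w => S.dom i ∩ S.map i ⁻¹' wordDom w

def wordMap : List ℕ → X → X
  | [] => id
  | i :: w => wordMap w ∘ S.map i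

theorem measurableSet_wordDom : ∀ w, MeasurableSet (S.wordDom w)
  | [] => .univ
  | i :: w => (S.measurableSet_dom i).inter (S.measurable_map i (measurableSet_wordDom w))

theorem measurable_wordMap : ∀ w, Measurable (S.wordMap w)
  | [] => measurable_id
  | i :: w => (measurable_wordMap w).comp (S.measurable_map i)

theorem injOn_wordMap : ∀ w, InjOn (S.wordMap w) (S.wordDom w)
  | [] => injOn_id _
  | i :: w => fun _ hx _ hy h => S.injOn i hx.1 hy.1 (injOn_wordMap w hx.2 hy.2 h)

theorem reachable_wordMap : ∀ w, ∀ x ∈ S.wordDom w, H.Reachable x (S.wordMap w x)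
  | [] => fun x _ => .refl x
  | i :: w => fun x hx => (S.mem i x hx.1).reachable.trans (reachable_wordMap w _ hx.2)

theorem exists_word_of_walk {x y : X} (p : H.Walk x y) :
    ∃ w, w.length = p.length ∧ x ∈ S.wordDom w ∧ S.wordMap w x = y := by
  induction p with
  | nil => exact ⟨[], rfl, trivial, rfl⟩
  | cons h p ih =>
    obtain ⟨i, hxi, hi⟩ := S.exists_eq _ _ h
    obtain ⟨w, hw, hxw, hwy⟩ := ih
    exact ⟨i :: w, by simp [hw], ⟨hxi, by simpa [hi] using hxw⟩, by simp [wordMap, hi, hwy]⟩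

theorem measure_image_wordMap_le {μ : Measure X} {ρ : X → X → ℝ≥0∞}
    (hρ : IsRNCocycle H.Reachable μ ρ) {κ : ℝ≥0∞} (hκ : ∀ x y, H.Adj x y → ρ x y ≤ κ) :
    ∀ w {D : Set X}, D ⊆ S.wordDom w → μ (S.wordMap w '' D) ≤ κ ^ w.length * μ D
  | [], D, _ => by simp [wordMap]
  | i :: w, D, hD =>
    calc μ (S.wordMap (i :: w) '' D) = μ (S.wordMap w '' (S.map i '' D)) := by
          rw [wordMap, image_comp]
      _ ≤ κ ^ w.length * μ (S.map i '' D) :=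
          measure_image_wordMap_le hρ hκ w (image_subset_iff.2 fun x hx => (hD hx).2)
      _ ≤ κ ^ w.length * (κ * μ D) := by
          gcongr
          exact hρ.measure_image_le (S.measurableSet_dom i) (S.measurable_map i) (S.injOn i)
            (fun x hx => (S.mem i x hx).reachable) (fun x hx => hκ _ _ (S.mem i x hx))
            fun x hx => (hD hx).1
      _ = κ ^ (i :: w).length * μ D := by rw [List.length_cons, pow_succ, mul_assoc]

end BorelAdjCover

theorem SimpleGraph.ae_cocycle_le_pow {X : Type} [MeasurableSpace X] [StandardBorelSpace X]
    {H : SimpleGraph X} (hH : MeasurableSet {p : X × X | H.Adj p.1 p.2}) {N : ℕ}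
    (hN : ∀ x, ∃ F : Finset X, H.neighborSet x ⊆ F ∧ F.card ≤ N)
    {μ : Measure X} [IsFiniteMeasure μ] {ρ : X → X → ℝ≥0∞}
    (hρ : IsRNCocycle H.Reachable μ ρ) {κ : ℝ≥0∞} (hκ₁ : 1 < κ) (hκ : κ ≠ ⊤)
    (hbound : ∀ x y, H.Adj x y → ρ x y ≤ κ) :
    ∀ᵐ x ∂μ, ∀ y (p : H.Walk x y), ρ x y ≤ κ ^ (p.length + 1) := by
  obtain ⟨S⟩ := BorelAdjCover.nonempty hH hN
  have hnull : ∀ w, μ {x | x ∈ S.wordDom w ∧ κ ^ (w.length + 1) < ρ x (S.wordMap w x)} = 0 := by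
    intro w
    set B := {x | x ∈ S.wordDom w ∧ κ ^ (w.length + 1) < ρ x (S.wordMap w x)}
    have hBw : B ⊆ S.wordDom w := fun x hx => hx.1
    have hB : MeasurableSet B := (S.measurableSet_wordDom w).inter <|
      measurableSet_lt measurable_const (hρ.1.comp (measurable_id.prodMk (S.measurable_wordMap w)))
    have h := (hρ.mul_measure_le_measure_image hB (S.measurable_wordMap w)
      ((S.injOn_wordMap w).mono hBw) (fun x hx => S.reachable_wordMap w x hx.1)
      fun x hx => hx.2.le).trans (S.measure_image_wordMap_le hρ hbound w hBw)
    -- `h : κ ^ (n + 1) * μ B ≤ κ ^ n * μ B` with `n = w.length`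
    by_contra hB0
    replace h : κ * (κ ^ w.length * μ B) ≤ 1 * (κ ^ w.length * μ B) := by
      rwa [one_mul, ← mul_assoc, ← pow_succ']
    exact hκ₁.not_ge ((ENNReal.mul_le_mul_iff_left (mul_ne_zero (pow_ne_zero _ (by positivity))
      hB0) (ENNReal.mul_ne_top (ENNReal.pow_ne_top hκ) (measure_ne_top μ B))).mp h)
  rw [ae_iff]
  refine measure_mono_null (fun x hx => ?_) (measure_iUnion_null hnull)
  simp only [mem_ofPred_eq, not_forall, not_le] at hx
  obtain ⟨y, p, hp⟩ := hx
  obtain ⟨w, hw, hxw, rfl⟩ := S.exists_word_of_walk p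
  exact mem_iUnion.2 ⟨w, hxw, hw ▸ hp⟩

section LineGraph

variable {V : Type} {G : SimpleGraph V}

theorem lineGraph_neighborSet_subset {Δ : ℕ} (hdeg : DegreeBounded G Δ) (e : Sym2 V) :
    ∃ F : Finset (Sym2 V), (lineGraph G).neighborSet e ⊆ F ∧ F.card ≤ 2 * Δ := by
  classical
  refine Sym2.ind (fun u v => ?_) e
  obtain ⟨su, hsu, hu⟩ := hdeg u
  obtain ⟨sv, hsv, hv⟩ := hdeg v
  refine ⟨su.image (s(u, ·)) ∪ sv.image (s(v, ·)), fun f hf => ?_,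
    (Finset.card_union_le _ _).trans (by grind [Finset.card_image_le])⟩
  obtain ⟨-, hfE, -, w, hwe, hwf⟩ := lineGraph_adj_iff.mp hf
  obtain ⟨x, rfl⟩ := Sym2.mem_iff_exists.mp hwf
  have hwx : x ∈ G.neighborSet w := hfE
  rcases Sym2.mem_iff.mp hwe with rfl | rfl
  · rw [← hsu] at hwx
    exact Finset.mem_union_left _ (Finset.mem_image_of_mem _ hwx)
  · rw [← hsv] at hwx
    exact Finset.mem_union_right _ (Finset.mem_image_of_mem _ hwx)

theorem EChain.seq_eq_none_of_le (P : EChain V) {k n : ℕ} (hk : P.seq k = none) (hkn : k ≤ n) :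
    P.seq n = none := by
  induction n, hkn using Nat.le_induction with
  | base => exact hk
  | succ n _ ih => exact P.closed n ih

theorem EChain.exists_walk_lineGraph {P : EChain V} (hchain : P.IsChainSeq) (hinj : P.EdgeInj)
    (hedges : ∀ n e, P.seq n = some e → e ∈ G.edgeSet) {e : Sym2 V} (he : P.seq 0 = some e) :
    ∀ {n f}, P.seq n = some f → ∃ p : (lineGraph G).Walk e f, p.length = n
  | 0, f, hf => by
    obtain rfl : e = f := Option.some_injective _ (he.symm.trans hf)
    exact ⟨.nil, rfl⟩
  | n + 1, f, hf => by
    obtain ⟨g, hg⟩ := Option.ne_none_iff_exists'.mp fun h => by simp [P.closed n h] at hf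
    obtain ⟨p, hp⟩ := exists_walk_lineGraph hchain hinj hedges he hg
    have hgf : g ≠ f := fun h => by simpa using hinj n (n + 1) g hg (h ▸ hf)
    exact ⟨p.concat (lineGraph_adj_iff.mpr ⟨hedges n g hg, hedges (n + 1) f hf, hgf,
      hchain n g f hg hf⟩), by simp [hp]⟩

end LineGraph

theorem chainWeight_eq_sum {V : Type} (ρ : Sym2 V → Sym2 V → ℝ≥0∞) (e : Sym2 V) {W : EChain V}
    {k : ℕ} (hk : W.seq k = none) :
    chainWeight ρ e W = ∑ n ∈ Finset.range k, (W.seq n).elim 0 (ρ e) := by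
  refine tsum_eq_sum fun n hn => ?_
  rw [W.seq_eq_none_of_le hk (by simpa using hn)]
  rfl

theorem exists_lt_cocycle_of_sum_lt_chainWeight {V : Type} {ρ : Sym2 V → Sym2 V → ℝ≥0∞}
    {e : Sym2 V} {W : EChain V} {k : ℕ} (hk : W.seq k = none) {b : ℕ → ℝ≥0∞}
    (hb : ∑ n ∈ Finset.range k, b n < chainWeight ρ e W) :
    ∃ n f, W.seq n = some f ∧ b n < ρ e f := by
  rw [chainWeight_eq_sum ρ e hk] at hb
  obtain ⟨n, -, hn⟩ := Finset.exists_lt_of_sum_lt hb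
  cases hWn : W.seq n with
  | none => simp [hWn] at hn
  | some f => exact ⟨n, f, hWn, by simpa [hWn] using hn⟩

theorem sum_range_pow_succ_le {κ : ℝ≥0∞} (hκ : 2 ≤ κ) (k : ℕ) :
    ∑ n ∈ Finset.range k, κ ^ (n + 1) ≤ κ ^ (k + 1) := by
  induction k with
  | zero => simp
  | succ k ih =>
    calc ∑ n ∈ Finset.range (k + 1), κ ^ (n + 1) ≤ κ ^ (k + 1) + κ ^ (k + 1) := by
          rw [Finset.sum_range_succ]; gcongr
      _ = 2 * κ ^ (k + 1) := (two_mul _).symm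
      _ ≤ κ ^ (k + 2) := by rw [pow_succ' κ (k + 1)]; gcongr

theorem one_le_of_two_mul_le_logb {Δ L : ℕ} (hL : (2 * Δ : ℝ) ≤ Real.logb (8 * Δ) L / 2 - 1) :
    1 ≤ Δ := by
  by_contra! hΔ
  norm_num [Nat.lt_one_iff.mp hΔ] at hL

theorem pow_succ_le_of_lt_logb {Δ L k : ℕ} (hL : (2 * Δ : ℝ) ≤ Real.logb (8 * Δ) L / 2 - 1)
    (hk : (k : ℝ) < Real.logb (8 * Δ) L / 2 + 2 * Δ) : (8 * Δ : ℝ≥0∞) ^ (k + 1) ≤ L := by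
  have hb : (1 : ℝ) < 8 * Δ := by
    have : (1 : ℝ) ≤ Δ := by exact_mod_cast one_le_of_two_mul_le_logb hL
    linarith
  have hL₀ : (0 : ℝ) < L := by
    rcases Nat.eq_zero_or_pos L with rfl | hL₀
    · simp only [Nat.cast_zero, Real.logb_zero, zero_div, zero_sub] at hL
      linarith [(Nat.cast_nonneg Δ : (0 : ℝ) ≤ Δ)]
    · exact_mod_cast hL₀
  have h := (Real.le_logb_iff_rpow_le hb hL₀).mp (show ((k + 1 : ℕ) : ℝ) ≤ _ by push_cast; linarith)
  rw [Real.rpow_natCast] at h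
  exact_mod_cast h

theorem IsVizingChain3.exists_walk_lineGraph {V : Type} {G : SimpleGraph V} {Δ : ℕ}
    {c : Sym2 V → Option (Fin (Δ + 1))} {e : Sym2 V} {W : EChain V}
    (hW : IsVizingChain3 G Δ c e W) {n : ℕ} {f : Sym2 V} (hf : W.seq n = some f) :
    ∃ p : (lineGraph G).Walk e f, p.length = n := by
  obtain ⟨_, _, _, _, _, _, _, _, _, _, _, _, _, _, _, _, _, _, hd, rfl⟩ := hW
  have hs := hd.aug.1.1
  exact EChain.exists_walk_lineGraph hs.chain hs.inj hs.edges hd.firstEdge hf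

theorem ae_bad_edges_general {V : Type} [MeasurableSpace V] [StandardBorelSpace V]
    (Δ : ℕ) (G : SimpleGraph V) (hE : MeasurableSet G.edgeSet) (hdeg : DegreeBounded G Δ)
    (ν : Measure (Sym2 V)) [IsProbabilityMeasure ν]
    (ρ : Sym2 V → Sym2 V → ℝ≥0∞)
    (hρ : IsRNCocycle (lineGraph G).Reachable ν ρ)
    (hρbound : ∀ e f : Sym2 V, (lineGraph G).Adj e f → ρ e f ≤ (8 * Δ : ℝ≥0∞))
    (c : Sym2 V → Option (Fin (Δ + 1)))
    (L : ℕ) (hL : (2 * Δ : ℝ) ≤ Real.logb (8 * Δ) L / 2 - 1)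
    (himp : NoImprovement G Δ ν ρ c L) :
    ν {e : Sym2 V | e ∈ G.edgeSet ∧ c e = none ∧
        ¬ ∀ W : EChain V, IsVizingChain3 G Δ c e W →
          ∀ n : ℕ, (n : ℝ) < Real.logb (8 * Δ) L / 2 + 2 * Δ → (W.seq n).isSome} = 0 := by
  have hκ : (2 : ℝ≥0∞) ≤ 8 * Δ := by
    have : (1 : ℝ≥0∞) ≤ Δ := by exact_mod_cast one_le_of_two_mul_le_logb hL
    calc (2 : ℝ≥0∞) ≤ 8 * 1 := by norm_num
      _ ≤ 8 * Δ := by gcongr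
  have hwalk := (lineGraph G).ae_cocycle_le_pow (measurableSet_lineGraph_adj hE)
    (lineGraph_neighborSet_subset hdeg) hρ (ENNReal.one_lt_two.trans_le hκ)
    (ENNReal.mul_ne_top ENNReal.ofNat_ne_top (ENNReal.natCast_ne_top Δ)) hρbound
  refine measure_mono_null (fun e ⟨he, hce, hbad⟩ => ?_) (measure_union_null himp (ae_iff.mp hwalk))
  simp only [not_forall, Option.not_isSome_iff_eq_none] at hbad
  obtain ⟨W, hW, k, hk, hWk⟩ := hbad
  by_cases hWL : chainWeight ρ e W ≤ L
  · exact Or.inl ⟨he, hce, W, hW, hWL⟩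
  obtain ⟨n, f, hf, hρf⟩ := exists_lt_cocycle_of_sum_lt_chainWeight hWk
    (((sum_range_pow_succ_le hκ k).trans (pow_succ_le_of_lt_logb hL hk)).trans_lt (not_le.mp hWL))
  obtain ⟨p, rfl⟩ := hW.exists_walk_lineGraph hf
  exact Or.inr fun h => (h f p).not_gt hρf

/-- If `c` admits no improvement of weight `L` (with cocycle bounded by `8Δ` on adjacent
edges) and `log_{8Δ}(L)/2 - 1 ≥ 2Δ`, then `ν`-almost every uncolored edge is
`(log_{8Δ}(L)/4)`-bad: every 3-step Vizing chain at it has length at least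
`log_{8Δ}(L)/2 + 2Δ`. -/
theorem ae_bad_edges {V : Type} [MeasurableSpace V] [StandardBorelSpace V]
    (Δ : ℕ) (G : SimpleGraph V) (hE : MeasurableSet G.edgeSet) (hdeg : DegreeBounded G Δ)
    (ν : Measure (Sym2 V)) [IsProbabilityMeasure ν] (hνE : ν G.edgeSetᶜ = 0)
    (hqi : QuasiInvariant (lineGraph G) ν)
    (ρ : Sym2 V → Sym2 V → ℝ≥0∞)
    (hρ : IsRNCocycle (lineGraph G).Reachable ν ρ)
    (hρbound : ∀ e f : Sym2 V, (lineGraph G).Adj e f → ρ e f ≤ (8 * Δ : ℝ≥0∞))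
    (c : Sym2 V → Option (Fin (Δ + 1)))
    (hc : IsPartialColoring G Δ c) (hcm : MeasurableColoring c)
    (L : ℕ) (hL : (2 * Δ : ℝ) ≤ Real.logb (8 * Δ) L / 2 - 1)
    (himp : NoImprovement G Δ ν ρ c L) :
    ν {e : Sym2 V | e ∈ G.edgeSet ∧ c e = none ∧
        ¬ ∀ W : EChain V, IsVizingChain3 G Δ c e W →
          ∀ n : ℕ, (n : ℝ) < Real.logb (8 * Δ) L / 2 + 2 * Δ → (W.seq n).isSome} = 0 :=
  ae_bad_edges_general Δ G hE hdeg ν ρ hρ hρbound c L hL himp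
end

section
/- Let c be a partial coloring of a graph 𝒢 with maximum degree Δ, and let R = (F¹)⌢(P¹)⌢(F²) be a c-proper-shiftable chain where F¹ is a prefix of a maximal fan F_c(y₁,e) at an uncolored edge e, P¹ is a prefix of an alternating path P_c(z₁,α₁/β₁), and F² is a prefix of a maximal conditional fan F_c(z₁,α₁/β₁,y₂) whose last edge is {y₂,z₂}. Let P_c(z₂,α₂/β₂) be an alternating path starting at z₂, and let f² ∈ P_c(z₂,α₂/β₂) be 2-suitable, i.e.: f² has graph distance at least 3 from every edge of R, f² is not the last edge of P_c(z₂,α₂/β₂), and c(f²)=α₂. Set P² = P_c(z₂,α₂/β₂)_{i(f²)−1} (the prefix of the path ending just before f²), let y₃ be the last vertex of P_c(z₂,α₂/β₂)_{i(f²)}, and assume R⌢P² is c-proper-shiftable. Then the chain P = R⌢P²⌢F_c(z₂,α₂/β₂,y₃), where F_c(z₂,α₂/β₂,y₃) is the maximal α₂/β₂-conditional fan starting at f², is c-proper-shiftable. -/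
open MeasureTheory
open scoped ENNReal

/-!
Write `A = R⌢P²` and `e = Q2_{j-1}` for its last edge. Shifting along `A⌢F³` is shifting along
`A`, which uncolors `e` and recolors `Q2_{j-2}` with `β₂`, and then along `e⌢F³`, which gives `e`
the color `α₂ = c(f²)` and every fan edge the color of its successor. All these colors are free:
`α₂` is now missing at both ends of `e`, and the successor color of a fan edge is missing at its
tip and is neither `α₂` nor `β₂`, so it cannot clash with the path edges, whose new colors are
`α₂` or `β₂`. The edges of `R` never interfere because they are at distance at least `3` from
`f²`; this also forces `j ≠ 0`, since the last edge `{y₂, z₂}` of `R` contains `z₂`.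
-/

namespace EChain

variable {V : Type}

@[ext]
theorem ext {P Q : EChain V} (h : ∀ n, P.seq n = Q.seq n) : P = Q := by
  obtain ⟨p, _⟩ := P
  obtain ⟨q, _⟩ := Q
  simp only [mk.injEq]
  exact funext h

theorem seq_eq_none_of_le_s11 (P : EChain V) {m n : ℕ} (h : P.seq m = none) (hmn : m ≤ n) :
    P.seq n = none := by
  induction n, hmn using Nat.le_induction with
  | base => exact h
  | succ n _ ih => exact P.closed n ih

theorem isSome_of_le (P : EChain V) {m n : ℕ} (h : (P.seq n).isSome) (hmn : m ≤ n) :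
    (P.seq m).isSome := by
  contrapose! h
  exact Option.not_isSome_iff_eq_none.mpr
    (P.seq_eq_none_of_le_s11 (Option.not_isSome_iff_eq_none.mp h) hmn)

theorem lenEq_find (P : EChain V) (h : ∃ k, P.seq k = none) : P.lenEq (Nat.find h) :=
  ⟨Nat.find_spec h, fun _ hn => Option.ne_none_iff_isSome.mp (Nat.find_min h hn)⟩

theorem lenEq.unique {P : EChain V} {k l : ℕ} (hk : P.lenEq k) (hl : P.lenEq l) : k = l := by
  by_contra hne
  rcases Nat.lt_or_gt_of_ne hne with h | h
  · simpa [hk.1] using hl.2 k h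
  · simpa [hl.1] using hk.2 l h

theorem lenEq.seq_eq_none {P : EChain V} {k n : ℕ} (hk : P.lenEq k) (hn : k ≤ n) :
    P.seq n = none :=
  P.seq_eq_none_of_le_s11 hk.1 hn

theorem lenEq_take {P : EChain V} {j : ℕ} (h : ∀ n < j, (P.seq n).isSome) :
    (P.take j).lenEq j :=
  ⟨if_neg (lt_irrefl j), fun n hn => by simpa [take, hn] using h n hn⟩

theorem take_seq_of_lt (P : EChain V) {j n : ℕ} (hn : n < j) : (P.take j).seq n = P.seq n :=
  if_pos hn

theorem append_seq_of_lenEq {P : EChain V} {L : ℕ} (hP : P.lenEq L) (Q : EChain V) (n : ℕ) :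
    (P.append Q).seq n = if n < L then P.seq n else Q.seq (n - L) := by
  have hex : ∃ k, P.seq k = none := ⟨L, hP.1⟩
  have hfind : Nat.find hex = L := (P.lenEq_find hex).unique hP
  classical
  show (if h : ∃ k, P.seq k = none then
      (if n < Nat.find h then P.seq n else Q.seq (n - Nat.find h)) else P.seq n) = _
  rw [dif_pos hex, hfind]

theorem append_seq_of_lt {P : EChain V} {L : ℕ} (hP : P.lenEq L) (Q : EChain V) {n : ℕ}
    (hn : n < L) : (P.append Q).seq n = P.seq n := by
  rw [append_seq_of_lenEq hP, if_pos hn]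

theorem append_seq_add {P : EChain V} {L : ℕ} (hP : P.lenEq L) (Q : EChain V) (n : ℕ) :
    (P.append Q).seq (L + n) = Q.seq n := by
  rw [append_seq_of_lenEq hP, if_neg (by omega), Nat.add_sub_cancel_left]

theorem append_of_infinite {P : EChain V} (h : P.Infinite) (Q : EChain V) : P.append Q = P := by
  have hex : ¬ ∃ k, P.seq k = none := fun ⟨k, hk⟩ => by simpa [hk] using h k
  classical
  ext1 n
  show (if h : ∃ k, P.seq k = none then
      (if n < Nat.find h then P.seq n else Q.seq (n - Nat.find h)) else P.seq n) = _
  rw [dif_neg hex]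

theorem lenEq_append {P Q : EChain V} {L M : ℕ} (hP : P.lenEq L) (hQ : Q.lenEq M) :
    (P.append Q).lenEq (L + M) := by
  refine ⟨by rw [append_seq_add hP]; exact hQ.1, fun n hn => ?_⟩
  rw [append_seq_of_lenEq hP]
  split_ifs with h
  · exact hP.2 n h
  · exact hQ.2 _ (by omega)

theorem append_assoc (P : EChain V) {Q : EChain V} {M : ℕ} (hQ : Q.lenEq M) (S : EChain V) :
    P.append (Q.append S) = (P.append Q).append S := by
  by_cases hP : ∃ k, P.seq k = none
  · have hPL := P.lenEq_find hP
    ext1 n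
    rw [append_seq_of_lenEq (lenEq_append hPL hQ), append_seq_of_lenEq hPL,
      append_seq_of_lenEq hPL, append_seq_of_lenEq hQ]
    split_ifs <;> first | rfl | omega | (congr 1; omega)
  · have hinf : P.Infinite := fun n => Option.ne_none_iff_isSome.mp fun h => hP ⟨n, h⟩
    simp only [append_of_infinite hinf]

theorem take_append {P : EChain V} {L : ℕ} (hP : P.lenEq L) (Q : EChain V) :
    (P.append Q).take L = P := by
  ext1 n
  by_cases hn : n < L
  · rw [take_seq_of_lt _ hn, append_seq_of_lt hP _ hn]
  · rw [show (EChain.take _ L).seq n = none from if_neg hn, hP.seq_eq_none (not_lt.mp hn)]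

def drop (P : EChain V) (k : ℕ) : EChain V where
  seq n := P.seq (k + n)
  closed n := P.closed (k + n)

theorem EdgeInj.drop {P : EChain V} (h : P.EdgeInj) (k : ℕ) : (P.drop k).EdgeInj :=
  fun m n e hm hn => by simpa using h _ _ e hm hn

theorem shift_eq_of_seq {Δ : ℕ} {P : EChain V} (hinj : P.EdgeInj)
    (c : Sym2 V → Option (Fin (Δ + 1))) {n : ℕ} {g : Sym2 V} (h : P.seq n = some g) :
    P.shift c g = (P.seq (n + 1)).bind c := by
  have hex : ∃ m, P.seq m = some g := ⟨n, h⟩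
  classical
  show (if h : ∃ m, P.seq m = some g then (P.seq (Nat.find h + 1)).bind c else c g) = _
  rw [dif_pos hex, hinj _ _ _ (Nat.find_spec hex) h]

theorem shift_eq_of_not_mem {Δ : ℕ} {P : EChain V}
    (c : Sym2 V → Option (Fin (Δ + 1))) {g : Sym2 V} (h : ¬ P.mem g) :
    P.shift c g = c g := by
  classical
  show (if h : ∃ m, P.seq m = some g then (P.seq (Nat.find h + 1)).bind c else c g) = _
  exact dif_neg h

theorem shift_drop_shift_take {Δ : ℕ} {P : EChain V} (hinj : P.EdgeInj)
    (c : Sym2 V → Option (Fin (Δ + 1))) (k : ℕ) :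
    (P.drop k).shift ((P.take (k + 1)).shift c) = P.shift c := by
  have htake_inj : (P.take (k + 1)).EdgeInj := fun m n e hm hn => by
    simp only [take] at hm hn
    split_ifs at hm hn
    exact hinj m n e hm hn
  funext g
  by_cases hg : P.mem g
  · obtain ⟨n, hn⟩ := hg
    by_cases hkn : k ≤ n
    · have hD : (P.drop k).seq (n - k) = some g := by simpa [drop, Nat.add_sub_cancel' hkn]
      rw [shift_eq_of_seq (hinj.drop k) _ hD, shift_eq_of_seq hinj _ hn]
      show (P.seq (k + (n - k + 1))).bind _ = _
      rw [show k + (n - k + 1) = n + 1 by omega]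
      cases hnext : P.seq (n + 1) with
      | none => rfl
      | some h =>
        refine shift_eq_of_not_mem c fun ⟨m, hm⟩ => ?_
        simp only [take] at hm
        split_ifs at hm with hmk
        have := hinj _ _ _ hm hnext
        omega
    · have hD : ¬ (P.drop k).mem g := fun ⟨m, hm⟩ => by
        have := hinj _ _ _ hm hn
        omega
      have hT : (P.take (k + 1)).seq n = some g := by
        rw [take_seq_of_lt _ (by omega)]; exact hn
      rw [shift_eq_of_not_mem _ hD, shift_eq_of_seq htake_inj _ hT, shift_eq_of_seq hinj _ hn,
        take_seq_of_lt _ (by omega)]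
  · have hD : ¬ (P.drop k).mem g := fun ⟨m, hm⟩ => hg ⟨_, hm⟩
    have hT : ¬ (P.take (k + 1)).mem g := fun ⟨m, hm⟩ => by
      simp only [take] at hm
      split_ifs at hm
      exact hg ⟨m, hm⟩
    rw [shift_eq_of_not_mem _ hD, shift_eq_of_not_mem _ hT, shift_eq_of_not_mem _ hg]

theorem drop_append_seq_zero {P : EChain V} {L : ℕ} (hP : P.lenEq (L + 1)) (Q : EChain V) :
    ((P.append Q).drop L).seq 0 = P.seq L :=
  append_seq_of_lt hP Q (Nat.lt_succ_self L)

theorem drop_append_seq_succ {P : EChain V} {L : ℕ} (hP : P.lenEq (L + 1)) (Q : EChain V)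
    (i : ℕ) : ((P.append Q).drop L).seq (i + 1) = Q.seq i := by
  show (P.append Q).seq (L + (i + 1)) = _
  rw [show L + (i + 1) = L + 1 + i by omega, append_seq_add hP]

theorem shift_append {Δ : ℕ} {P Q : EChain V} (hinj : (P.append Q).EdgeInj) {L : ℕ}
    (hP : P.lenEq (L + 1)) (c : Sym2 V → Option (Fin (Δ + 1))) :
    (P.append Q).shift c = ((P.append Q).drop L).shift (P.shift c) := by
  rw [← shift_drop_shift_take hinj c L, take_append hP]

theorem lenEq.lt_of_seq {P : EChain V} {L n : ℕ} (hP : P.lenEq L) {e : Sym2 V}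
    (he : P.seq n = some e) : n < L := by
  by_contra h
  rw [hP.seq_eq_none (not_lt.mp h)] at he
  exact absurd he (by simp)

theorem mem_append_left {P : EChain V} (Q : EChain V) {g : Sym2 V} (hg : P.mem g) :
    (P.append Q).mem g := by
  by_cases hP : ∃ k, P.seq k = none
  · obtain ⟨n, hn⟩ := hg
    have hPL := P.lenEq_find hP
    exact ⟨n, by rw [append_seq_of_lt hPL _ (hPL.lt_of_seq hn)]; exact hn⟩
  · rwa [append_of_infinite fun n => Option.ne_none_iff_isSome.mp fun h => hP ⟨n, h⟩]

theorem exists_lenEq_of_append {P Q : EChain V} (h : ∃ k, (P.append Q).seq k = none) :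
    ∃ L M, P.lenEq L ∧ Q.lenEq M := by
  obtain ⟨k, hk⟩ := h
  by_cases hP : ∃ k, P.seq k = none
  · have hPL := P.lenEq_find hP
    have hQ : ∃ k, Q.seq k = none := ⟨k - Nat.find hP, by
      rw [append_seq_of_lenEq hPL] at hk
      split_ifs at hk with hkL
      · exact absurd hk (Option.ne_none_iff_isSome.mpr (hPL.2 k hkL))
      · exact hk⟩
    exact ⟨_, _, hPL, Q.lenEq_find hQ⟩
  · rw [append_of_infinite fun n => Option.ne_none_iff_isSome.mp fun h => hP ⟨n, h⟩] at hk
    exact absurd ⟨k, hk⟩ hP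

theorem mem_append_right {P Q : EChain V} (h : ∃ k, (P.append Q).seq k = none) {g : Sym2 V}
    (hg : Q.mem g) : (P.append Q).mem g := by
  obtain ⟨L, -, hPL, -⟩ := exists_lenEq_of_append h
  obtain ⟨n, hn⟩ := hg
  exact ⟨L + n, by rw [append_seq_add hPL]; exact hn⟩

end EChain

section LineGraph

variable {V : Type} {G : SimpleGraph V}

theorem lineGraph_adj_of_mem {e f : Sym2 V} (he : e ∈ G.edgeSet) (hf : f ∈ G.edgeSet)
    (hne : e ≠ f) {v : V} (hve : v ∈ e) (hvf : v ∈ f) : (lineGraph G).Adj e f := by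
  refine ⟨he, hf, hne, v, ⟨hve, hvf⟩, fun w ⟨hwe, hwf⟩ => ?_⟩
  by_contra hwv
  exact hne (((Sym2.mem_and_mem_iff hwv).mp ⟨hwe, hve⟩).trans
    ((Sym2.mem_and_mem_iff hwv).mp ⟨hwf, hvf⟩).symm)

theorem lineGraph_exists_walk_length_le_one {e f : Sym2 V} (he : e ∈ G.edgeSet) (hf : f ∈ G.edgeSet)
    {v : V} (hve : v ∈ e) (hvf : v ∈ f) :
    ∃ p : (lineGraph G).Walk e f, p.length ≤ 1 := by
  by_cases hef : e = f
  · subst hef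
    exact ⟨.nil, zero_le_one⟩
  · exact ⟨(lineGraph_adj_of_mem he hf hef hve hvf).toWalk, le_rfl⟩

theorem not_edgeDistGE_three {g h f : Sym2 V} (hg : g ∈ G.edgeSet) (hh : h ∈ G.edgeSet)
    (hf : f ∈ G.edgeSet) (hgh : ∃ v, v ∈ g ∧ v ∈ h) (hhf : ∃ w, w ∈ h ∧ w ∈ f) :
    ¬ edgeDistGE G g f 3 := by
  obtain ⟨v, hvg, hvh⟩ := hgh
  obtain ⟨w, hwh, hwf⟩ := hhf
  obtain ⟨p, hp⟩ := lineGraph_exists_walk_length_le_one hg hh hvg hvh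
  obtain ⟨q, hq⟩ := lineGraph_exists_walk_length_le_one hh hf hwh hwf
  have hdist := SimpleGraph.dist_le (p.append q)
  rw [SimpleGraph.Walk.length_append] at hdist
  rintro (hnr | hge)
  · exact hnr ⟨p.append q⟩
  · omega

end LineGraph

section AltPath

variable {V : Type} {G : SimpleGraph V} {Δ : ℕ} {c : Sym2 V → Option (Fin (Δ + 1))}
  {x : V} {α β : Fin (Δ + 1)} {Q : EChain V}

theorem IsAltPath.mod_two_eq_zero (hQ : IsAltPath G c x α β Q) {n : ℕ} {e : Sym2 V}
    (he : Q.seq n = some e) (hce : c e = some α) : n % 2 = 0 := by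
  have := hQ.colors n e he
  rw [hce] at this
  split_ifs at this with h
  · exact h
  · exact absurd (Option.some.inj this) hQ.ne

theorem IsAltPath.color_eq (hQ : IsAltPath G c x α β Q) {n : ℕ} {e : Sym2 V}
    (he : Q.seq n = some e) : c e = some α ∨ c e = some β := by
  rw [hQ.colors n e he]
  split_ifs
  exacts [Or.inl rfl, Or.inr rfl]

/-- Edges of the same parity have the same color, so a proper coloring forbids them to meet. -/
theorem IsAltPath.eq_of_mem_of_mod_two_eq (hQ : IsAltPath G c x α β Q)
    (hc : IsPartialColoring G Δ c) {a b : ℕ} {ea eb : Sym2 V} (ha : Q.seq a = some ea)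
    (hb : Q.seq b = some eb) {v : V} (hva : v ∈ ea) (hvb : v ∈ eb) (hab : a % 2 = b % 2) :
    a = b := by
  by_contra hne
  have hcol : c ea = c eb := by rw [hQ.colors a ea ha, hQ.colors b eb hb, hab]
  refine hc.2 ea eb (fun h => hne (hQ.inj a b ea ha (h ▸ hb))) ⟨v, hva, hvb⟩ ?_ hcol
  rw [hQ.colors a ea ha]
  rfl

theorem IsAltPath.mem_or_mem_of_mem (hQ : IsAltPath G c x α β Q)
    (hc : IsPartialColoring G Δ c) {n : ℕ} {a b e : Sym2 V} (ha : Q.seq n = some a)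
    (hb : Q.seq (n + 1) = some b) (he : Q.seq (n + 2) = some e) {v : V} (hvb : v ∈ b) :
    v ∈ a ∨ v ∈ e := by
  obtain ⟨p, hpa, hpb⟩ := hQ.chain n a b ha hb
  obtain ⟨q, hqb, hqe⟩ := hQ.chain (n + 1) b e hb he
  have hpq : p ≠ q := fun h => by
    have := hQ.eq_of_mem_of_mod_two_eq hc ha he hpa (h ▸ hqe) (by omega)
    omega
  rw [(Sym2.mem_and_mem_iff hpq).mp ⟨hpb, hqb⟩, Sym2.mem_iff] at hvb
  rcases hvb with rfl | rfl
  exacts [Or.inl hpa, Or.inr hqe]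

theorem IsAltPath.index_le_of_mem (hQ : IsAltPath G c x α β Q) (hc : IsPartialColoring G Δ c)
    {n m : ℕ} {a b e g : Sym2 V} (ha : Q.seq n = some a) (hb : Q.seq (n + 1) = some b)
    (he : Q.seq (n + 2) = some e) (hg : Q.seq m = some g) {v : V} (hvb : v ∈ b)
    (hvg : v ∈ g) : n ≤ m ∧ m ≤ n + 2 := by
  have h := hQ.eq_of_mem_of_mod_two_eq hc hb hg hvb hvg
  rcases hQ.mem_or_mem_of_mem hc ha hb he hvb with hva | hve
  · have := hQ.eq_of_mem_of_mod_two_eq hc ha hg hva hvg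
    omega
  · have := hQ.eq_of_mem_of_mod_two_eq hc he hg hve hvg
    omega

end AltPath

section CondFan

variable {V : Type} {G : SimpleGraph V} {Δ : ℕ} {c : Sym2 V → Option (Fin (Δ + 1))}
  {α β : Fin (Δ + 1)} {y : V} {f : Sym2 V} {F : EChain V}

theorem IsMaxCondFan.exists_color_succ (hF : IsMaxCondFan G c α β y f F) {i : ℕ}
    {s t : Sym2 V} (hs : F.seq i = some s) (ht : F.seq (i + 1) = some t) :
    ∃ γ, c t = some γ ∧ γ ≠ α ∧ γ ≠ β ∧ ∀ u ∈ s, u ≠ y → γ ∈ missing G c u := by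
  obtain ⟨hys, hsE⟩ := hF.aty i s hs
  have hdiag := G.not_isDiag_of_mem_edgeSet hsE
  obtain ⟨γ, hmin, hγ⟩ := hF.step i s t hs ht _ (Sym2.other_mem hys) (Sym2.other_ne hdiag hys)
  have hcond := hF.cond i s hs (by rw [ht]; rfl) _ (Sym2.other_mem hys)
    (Sym2.other_ne hdiag hys)
  refine ⟨γ, hγ, fun h => hcond.1 (h ▸ hmin.1), fun h => hcond.2 (h ▸ hmin.1),
    fun u hu huy => ?_⟩
  obtain ⟨γ', hmin', hγ'⟩ := hF.step i s t hs ht u hu huy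
  rw [hγ] at hγ'
  exact Option.some.inj hγ' ▸ hmin'.1

theorem IsMaxCondFan.isChainSeq (hF : IsMaxCondFan G c α β y f F) : F.IsChainSeq :=
  fun n _ _ he hf => ⟨y, (hF.aty n _ he).1, (hF.aty (n + 1) _ hf).1⟩

theorem IsMaxCondFan.isSome_color (hF : IsMaxCondFan G c α β y f F) (hf : (c f).isSome)
    {n : ℕ} {e : Sym2 V} (he : F.seq n = some e) : (c e).isSome := by
  cases n with
  | zero => rwa [← Option.some.inj (hF.first.symm.trans he)]
  | succ n =>
    obtain ⟨s, hs⟩ := Option.isSome_iff_exists.mp (F.isSome_of_le (m := n) (by rw [he]; rfl)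
      n.le_succ)
    obtain ⟨γ, hγ, -⟩ := hF.exists_color_succ hs he
    rw [hγ]
    rfl

end CondFan

section Shift

variable {V : Type} {G : SimpleGraph V} {Δ : ℕ} {c : Sym2 V → Option (Fin (Δ + 1))}

theorem IsPartialColoring.shift {d : Sym2 V → Option (Fin (Δ + 1))}
    (hd : IsPartialColoring G Δ d) {S : EChain V} (hinj : S.EdgeInj)
    (hedges : ∀ n e, S.seq n = some e → e ∈ G.edgeSet)
    (hfree : ∀ i s t x, S.seq i = some s → S.seq (i + 1) = some t → ¬ S.mem x →
      (∃ v, v ∈ s ∧ v ∈ x) → d x ≠ d t)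
    (hdistinct : ∀ i i' s s' t t', i ≠ i' → S.seq i = some s → S.seq i' = some s' →
      S.seq (i + 1) = some t → S.seq (i' + 1) = some t' → (∃ v, v ∈ s ∧ v ∈ s') → d t ≠ d t') :
    IsPartialColoring G Δ (S.shift d) := by
  have hval : ∀ x, (∃ i, S.seq i = some x ∧ S.shift d x = (S.seq (i + 1)).bind d) ∨
      (¬ S.mem x ∧ S.shift d x = d x) := fun x => by
    by_cases hx : S.mem x
    · obtain ⟨i, hi⟩ := hx
      exact Or.inl ⟨i, hi, EChain.shift_eq_of_seq hinj d hi⟩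
    · exact Or.inr ⟨hx, EChain.shift_eq_of_not_mem d hx⟩
  refine ⟨fun x hx => ?_, fun x y hxy hxy' hx => ?_⟩
  · rcases hval x with ⟨i, hi, -⟩ | ⟨-, hdx⟩
    · exact hedges i x hi
    · exact hd.1 x (hdx ▸ hx)
  obtain ⟨v, hvx, hvy⟩ := hxy'
  rcases hval x with ⟨i, hi, hdx⟩ | ⟨hxS, hdx⟩ <;> rw [hdx] at hx ⊢
  · obtain ⟨t, ht⟩ := Option.isSome_iff_exists.mp (Option.isSome_of_isSome_bind hx)
    rw [ht, Option.bind_some] at hx ⊢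
    rcases hval y with ⟨i', hi', hdy⟩ | ⟨hyS, hdy⟩ <;> rw [hdy]
    · cases ht' : S.seq (i' + 1) with
      | none => exact Option.ne_none_iff_isSome.mpr hx
      | some t' =>
        refine hdistinct i i' x y t t' (fun h => hxy ?_) hi hi' ht ht' ⟨v, hvx, hvy⟩
        subst h
        exact Option.some.inj (hi.symm.trans hi')
    · exact (hfree i x t y hi ht hyS ⟨v, hvx, hvy⟩).symm
  · rcases hval y with ⟨i', hi', hdy⟩ | ⟨-, hdy⟩ <;> rw [hdy]
    · cases ht' : S.seq (i' + 1) with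
      | none => exact Option.ne_none_iff_isSome.mpr hx
      | some t' => exact hfree i' y t' x hi' ht' hxS ⟨v, hvy, hvx⟩
    · exact hd.2 x y hxy ⟨v, hvx, hvy⟩ hx

theorem IsShiftable.append {A F : EChain V} (hA : IsShiftable G Δ c A) {L : ℕ}
    (hL : A.lenEq (L + 1)) {a b : Sym2 V} (ha : A.seq L = some a) (hb : F.seq 0 = some b)
    (hab : ∃ v, v ∈ a ∧ v ∈ b) (hFchain : F.IsChainSeq)
    (hFE : ∀ n e, F.seq n = some e → e ∈ G.edgeSet) (hFinj : F.EdgeInj)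
    (hFc : ∀ n e, F.seq n = some e → (c e).isSome)
    (hdisj : ∀ n e, F.seq n = some e → ¬ A.mem e) : IsShiftable G Δ c (A.append F) := by
  have hseq : ∀ n e, (A.append F).seq n = some e →
      (n < L + 1 ∧ A.seq n = some e) ∨ (L + 1 ≤ n ∧ F.seq (n - (L + 1)) = some e) := by
    intro n e hn
    rw [EChain.append_seq_of_lenEq hL] at hn
    split_ifs at hn with h
    exacts [Or.inl ⟨h, hn⟩, Or.inr ⟨not_lt.mp h, hn⟩]
  refine ⟨fun n e e' hn hn' => ?_, fun n e hn => ?_, fun m n e hm hn => ?_, ?_,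
    fun n e hn => ?_⟩
  · rcases hseq n e hn with ⟨h, hA'⟩ | ⟨h, hF⟩ <;>
      rcases hseq (n + 1) e' hn' with ⟨h', hA''⟩ | ⟨h', hF'⟩
    · exact hA.chain n e e' hA' hA''
    · obtain rfl : n = L := by omega
      rw [ha] at hA'
      rw [Nat.sub_self, hb] at hF'
      exact Option.some.inj hA' ▸ Option.some.inj hF' ▸ hab
    · omega
    · exact hFchain _ e e' hF (by rwa [show n - (L + 1) + 1 = n + 1 - (L + 1) by omega])
  · rcases hseq n e hn with ⟨-, hA'⟩ | ⟨-, hF⟩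
    exacts [hA.edges n e hA', hFE _ e hF]
  · rcases hseq m e hm with ⟨h, hA'⟩ | ⟨h, hF⟩ <;> rcases hseq n e hn with ⟨h', hA''⟩ | ⟨h', hF'⟩
    · exact hA.inj m n e hA' hA''
    · exact absurd ⟨m, hA'⟩ (hdisj _ e hF')
    · exact absurd ⟨n, hA''⟩ (hdisj _ e hF)
    · have := hFinj _ _ e hF hF'
      omega
  · obtain ⟨e, he, hce⟩ := hA.first
    exact ⟨e, by rw [EChain.append_seq_of_lt hL _ (Nat.succ_pos L)]; exact he, hce⟩
  · rcases hseq (n + 1) e hn with ⟨-, hA'⟩ | ⟨-, hF⟩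
    exacts [hA.rest n e hA', hFc _ e hF]

end Shift

section CondFanGluing

variable {V : Type} {G : SimpleGraph V} {Δ : ℕ} {c : Sym2 V → Option (Fin (Δ + 1))}
  {z y : V} {α β : Fin (Δ + 1)} {R Q F : EChain V} {N j : ℕ} {f : Sym2 V}

theorem seq_append_take (hR : R.lenEq N) {n : ℕ} {x : Sym2 V}
    (hx : (R.append (Q.take j)).seq n = some x) :
    R.mem x ∨ ∃ m < j, n = N + m ∧ Q.seq m = some x := by
  rw [EChain.append_seq_of_lenEq hR] at hx
  split_ifs at hx with hn
  · exact Or.inl ⟨n, hx⟩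
  · simp only [EChain.take] at hx
    split_ifs at hx with hm
    exact Or.inr ⟨n - N, hm, by omega, hx⟩

theorem exists_eq_add_of_near (hR : R.lenEq N) (hRE : ∀ g, R.mem g → g ∈ G.edgeSet)
    (hfar : ∀ g, R.mem g → edgeDistGE G g f 3) (hf : f ∈ G.edgeSet) {n : ℕ} {x h : Sym2 V}
    (hx : (R.append (Q.take j)).seq n = some x) (hh : h ∈ G.edgeSet)
    (hxh : ∃ v, v ∈ x ∧ v ∈ h) (hhf : ∃ w, w ∈ h ∧ w ∈ f) :
    ∃ m < j, n = N + m ∧ Q.seq m = some x := by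
  refine (seq_append_take hR hx).resolve_left fun hxR => ?_
  exact not_edgeDistGE_three (hRE x hxR) hh hf hxh hhf (hfar x hxR)

theorem shift_append_take_add (hinj : (R.append (Q.take j)).EdgeInj) (hR : R.lenEq N)
    {m : ℕ} {x : Sym2 V} (hx : (R.append (Q.take j)).seq (N + m) = some x) :
    (R.append (Q.take j)).shift c x = ((Q.take j).seq (m + 1)).bind c := by
  rw [EChain.shift_eq_of_seq hinj c hx, Nat.add_assoc, EChain.append_seq_add hR]

theorem condFan_not_mem_append_take (hR : R.lenEq N) (hRE : ∀ g, R.mem g → g ∈ G.edgeSet)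
    (hfar : ∀ g, R.mem g → edgeDistGE G g f 3) (hQ : IsAltPath G c z α β Q)
    (hj : Q.seq j = some f) (hF : IsMaxCondFan G c α β y f F) {i : ℕ} {e : Sym2 V}
    (he : F.seq i = some e) : ¬ (R.append (Q.take j)).mem e := by
  rintro ⟨n, hn⟩
  obtain ⟨hye, heE⟩ := hF.aty i e he
  obtain ⟨hyf, hfE⟩ := hF.aty 0 f hF.first
  obtain ⟨m, hm, -, hQm⟩ := exists_eq_add_of_near hR hRE hfar hfE hn heE ⟨y, hye, hye⟩
    ⟨y, hye, hyf⟩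
  cases i with
  | zero =>
    rw [← Option.some.inj (hF.first.symm.trans he)] at hQm
    exact absurd (hQ.inj m j f hQm hj) hm.ne
  | succ i =>
    obtain ⟨s, hs⟩ := Option.isSome_iff_exists.mp (F.isSome_of_le (m := i) (by rw [he]; rfl)
      i.le_succ)
    obtain ⟨γ, hγ, hγα, hγβ, -⟩ := hF.exists_color_succ hs he
    rcases hQ.color_eq hQm with h | h <;> rw [hγ, Option.some.injEq] at h
    exacts [hγα h, hγβ h]

variable {k : ℕ}

theorem shift_append_take_ne_of_adj_last (hc : IsPartialColoring G Δ c)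
    (hQ : IsAltPath G c z α β Q) (hR : R.lenEq N) (hRE : ∀ g, R.mem g → g ∈ G.edgeSet)
    (hfar : ∀ g, R.mem g → edgeDistGE G g f 3) (hinj : (R.append (Q.take (k + 2))).EdgeInj)
    {eL x : Sym2 V} (heL : Q.seq (k + 1) = some eL) (hj : Q.seq (k + 2) = some f)
    (hcf : c f = some α) (hxL : x ≠ eL) (hxf : x ≠ f) (hvx : ∃ v, v ∈ eL ∧ v ∈ x) :
    (R.append (Q.take (k + 2))).shift c x ≠ some α := by
  have hk : k % 2 = 0 := by
    have := hQ.mod_two_eq_zero hj hcf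
    omega
  obtain ⟨e2, he2⟩ := Option.isSome_iff_exists.mp
    (Q.isSome_of_le (m := k) (by rw [hj]; rfl) (by omega))
  obtain ⟨v, hvL, hvx⟩ := hvx
  obtain ⟨w, hwL, hwf⟩ := hQ.chain (k + 1) eL f heL hj
  by_cases hxA : (R.append (Q.take (k + 2))).mem x
  · obtain ⟨n, hn⟩ := hxA
    obtain ⟨m, -, rfl, hQm⟩ := exists_eq_add_of_near hR hRE hfar (hQ.edges _ _ hj) hn
      (hQ.edges _ _ heL) ⟨v, hvx, hvL⟩ ⟨w, hwL, hwf⟩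
    have hm := hQ.index_le_of_mem hc he2 heL hj hQm hvL hvx
    have hmk : m ≠ k + 1 := by
      rintro rfl
      exact hxL (Option.some.inj (hQm.symm.trans heL))
    have hmf : m ≠ k + 2 := by
      rintro rfl
      exact hxf (Option.some.inj (hQm.symm.trans hj))
    obtain rfl : m = k := by omega
    rw [shift_append_take_add hinj hR hn, EChain.take_seq_of_lt _ (by omega), heL,
      Option.bind_some, hQ.colors _ _ heL, if_neg (by omega)]
    exact fun h => hQ.ne (Option.some.inj h).symm
  · rw [EChain.shift_eq_of_not_mem c hxA]
    intro hcx
    rcases hQ.mem_or_mem_of_mem hc he2 heL hj hvL with hv2 | hvf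
    · have hx2 : x ≠ e2 := by
        rintro rfl
        refine hxA ⟨N + k, ?_⟩
        rw [EChain.append_seq_add hR, EChain.take_seq_of_lt _ (by omega), he2]
      exact hc.2 x e2 hx2 ⟨v, hvx, hv2⟩ (by rw [hcx]; rfl)
        (by rw [hcx, hQ.colors _ _ he2, if_pos hk])
    · exact hc.2 x f hxf ⟨v, hvx, hvf⟩ (by rw [hcx]; rfl) (by rw [hcx, hcf])

theorem shift_append_take_ne_of_adj_condFan (hc : IsPartialColoring G Δ c)
    (hQ : IsAltPath G c z α β Q) (hR : R.lenEq N) (hRE : ∀ g, R.mem g → g ∈ G.edgeSet)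
    (hfar : ∀ g, R.mem g → edgeDistGE G g f 3) (hinj : (R.append (Q.take j)).EdgeInj)
    (hF : IsMaxCondFan G c α β y f F) {i : ℕ} {s t x : Sym2 V} (hs : F.seq i = some s)
    (ht : F.seq (i + 1) = some t) (hxF : ¬ F.mem x) (hvx : ∃ v, v ∈ s ∧ v ∈ x) :
    (R.append (Q.take j)).shift c x ≠ c t := by
  obtain ⟨γ, hγ, hγα, hγβ, hmiss⟩ := hF.exists_color_succ hs ht
  rw [hγ]
  obtain ⟨v, hvs, hvx⟩ := hvx
  obtain ⟨hys, hsE⟩ := hF.aty i s hs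
  obtain ⟨hyf, hfE⟩ := hF.aty 0 f hF.first
  by_cases hxA : (R.append (Q.take j)).mem x
  · obtain ⟨n, hn⟩ := hxA
    obtain ⟨m, -, rfl, -⟩ := exists_eq_add_of_near hR hRE hfar hfE hn hsE ⟨v, hvx, hvs⟩
      ⟨y, hys, hyf⟩
    rw [shift_append_take_add hinj hR hn]
    cases hq : (Q.take j).seq (m + 1) with
    | none => exact fun h => absurd h (by simp)
    | some q =>
      have hq' : Q.seq (m + 1) = some q := by
        simp only [EChain.take] at hq
        split_ifs at hq
        exact hq
      rw [Option.bind_some]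
      rcases hQ.color_eq hq' with h | h <;> rw [h] <;> intro h' <;>
        [exact hγα (Option.some.inj h').symm; exact hγβ (Option.some.inj h').symm]
  · rw [EChain.shift_eq_of_not_mem c hxA]
    intro hcx
    by_cases hvy : v = y
    · subst hvy
      exact hc.2 x t (fun h => hxF ⟨i + 1, h ▸ ht⟩) ⟨v, hvx, (hF.aty _ t ht).1⟩
        (by rw [hcx]; rfl) (by rw [hcx, hγ])
    · exact hmiss v hvs hvy x (hc.1 x (by rw [hcx]; rfl)) hvx hcx

theorem IsProperShiftable.append_condFan (hc : IsPartialColoring G Δ c)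
    (hQ : IsAltPath G c z α β Q) (hj : Q.seq (k + 2) = some f) (hcf : c f = some α)
    (hR : R.lenEq N) (hfar : ∀ g, R.mem g → edgeDistGE G g f 3)
    (hA : IsProperShiftable G Δ c (R.append (Q.take (k + 2))))
    (hF : IsMaxCondFan G c α β y f F) :
    IsProperShiftable G Δ c ((R.append (Q.take (k + 2))).append F) := by
  set A := R.append (Q.take (k + 2))
  have hAlen : A.lenEq (N + (k + 1) + 1) := by
    have := EChain.lenEq_append hR
      (EChain.lenEq_take fun n (hn : n < k + 2) => Q.isSome_of_le (by rw [hj]; rfl) hn.le)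
    exact this
  obtain ⟨eL, heL⟩ := Option.isSome_iff_exists.mp
    (Q.isSome_of_le (m := k + 1) (by rw [hj]; rfl) (by omega))
  have heLA : A.seq (N + (k + 1)) = some eL := by
    rw [EChain.append_seq_add hR, EChain.take_seq_of_lt _ (by omega), heL]
  have hRE : ∀ g, R.mem g → g ∈ G.edgeSet := fun g hg => by
    obtain ⟨n, hn⟩ := EChain.mem_append_left (Q.take (k + 2)) hg
    exact hA.1.edges n g hn
  have hdisj : ∀ n e, F.seq n = some e → ¬ A.mem e :=
    fun _ _ he => condFan_not_mem_append_take hR hRE hfar hQ hj hF he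
  have hFc : ∀ n e, F.seq n = some e → (c e).isSome :=
    fun _ _ he => hF.isSome_color (by rw [hcf]; rfl) he
  have hshift : IsShiftable G Δ c (A.append F) :=
    hA.1.append hAlen heLA hF.first (hQ.chain _ _ _ heL hj) hF.isChainSeq
      (fun n e he => (hF.aty n e he).2) hF.inj hFc hdisj
  refine ⟨hshift, ?_⟩
  rw [EChain.shift_append hshift.inj hAlen]
  have hD0 := EChain.drop_append_seq_zero hAlen F
  have hDs := EChain.drop_append_seq_succ hAlen F
  refine hA.2.shift (hshift.inj.drop _) (fun n e he => hshift.edges _ e he) ?_ ?_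
  · intro i s t x hs ht hxD hsx
    have hxF : ¬ F.mem x := fun ⟨n, hn⟩ => hxD ⟨n + 1, (hDs n).trans hn⟩
    rw [hDs] at ht
    rw [EChain.shift_eq_of_not_mem c (hdisj _ _ ht)]
    cases i with
    | zero =>
      obtain rfl := Option.some.inj ((hD0.trans heLA).symm.trans hs)
      obtain rfl := Option.some.inj (hF.first.symm.trans ht)
      rw [hcf]
      exact shift_append_take_ne_of_adj_last hc hQ hR hRE hfar hA.1.inj heL hj hcf
        (fun h => hxD ⟨0, h ▸ hD0.trans heLA⟩) (fun h => hxF ⟨0, h ▸ hF.first⟩) hsx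
    | succ i =>
      rw [hDs] at hs
      exact shift_append_take_ne_of_adj_condFan hc hQ hR hRE hfar hA.1.inj hF hs ht hxF hsx
  · intro i i' _ _ t t' hii' _ _ ht ht' _
    rw [hDs] at ht ht'
    rw [EChain.shift_eq_of_not_mem c (hdisj _ _ ht), EChain.shift_eq_of_not_mem c (hdisj _ _ ht')]
    refine hc.2 t t' (fun h => hii' ?_) ⟨y, (hF.aty _ _ ht).1, (hF.aty _ _ ht').1⟩ (hFc _ _ ht)
    exact hF.inj _ _ _ ht (h ▸ ht')

end CondFanGluing

theorem two_suitable_proper_shiftable_general {V : Type} (Δ : ℕ) (G : SimpleGraph V)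
    (c : Sym2 V → Option (Fin (Δ + 1))) (hc : IsPartialColoring G Δ c)
    (y₂ z₂ y₃ : V) (α₂ β₂ : Fin (Δ + 1))
    (F1 P1 F2 : EChain V)
    (hF2last : ∃ n, F2.seq n = some s(y₂, z₂) ∧ F2.seq (n + 1) = none)
    (R : EChain V) (hR : R = F1.append (P1.append F2))
    (Q2 : EChain V) (hQ2 : IsAltPath G c z₂ α₂ β₂ Q2)
    (f₂ : Sym2 V) (j : ℕ) (hj : Q2.seq j = some f₂)
    (hsuit1 : ∀ g : Sym2 V, R.mem g → edgeDistGE G g f₂ 3)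
    (hsuit3 : c f₂ = some α₂)
    (P2 : EChain V) (hP2 : P2 = Q2.take j)
    (hRP2 : IsProperShiftable G Δ c (R.append P2))
    (F3 : EChain V) (hF3 : IsMaxCondFan G c α₂ β₂ y₃ f₂ F3) :
    IsProperShiftable G Δ c (R.append (P2.append F3)) := by
  by_cases hRfin : ∃ n, R.seq n = none
  swap
  · have hRinf : R.Infinite := fun n => Option.ne_none_iff_isSome.mp fun h => hRfin ⟨n, h⟩
    rw [EChain.append_of_infinite hRinf] at hRP2 ⊢
    exact hRP2
  have hzR : R.mem s(y₂, z₂) := by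
    obtain ⟨n, hn, -⟩ := hF2last
    obtain ⟨-, M, -, hM⟩ := EChain.exists_lenEq_of_append (hR ▸ hRfin)
    exact hR ▸ EChain.mem_append_right (hR ▸ hRfin) (EChain.mem_append_right ⟨M, hM.1⟩ ⟨n, hn⟩)
  have hj0 : j ≠ 0 := by
    rintro rfl
    obtain ⟨n, hn⟩ := EChain.mem_append_left P2 hzR
    have hf₂E := hQ2.edges _ _ hj
    exact not_edgeDistGE_three (hRP2.1.edges n _ hn) hf₂E hf₂E
      ⟨z₂, Sym2.mem_mk_right y₂ z₂, hQ2.start f₂ hj⟩ ⟨z₂, hQ2.start f₂ hj, hQ2.start f₂ hj⟩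
      (hsuit1 _ hzR)
  obtain ⟨k, rfl⟩ : ∃ k, j = k + 2 := ⟨j - 2, by have := hQ2.mod_two_eq_zero hj hsuit3; omega⟩
  subst hP2
  rw [R.append_assoc (EChain.lenEq_take fun n hn => Q2.isSome_of_le (by rw [hj]; rfl) hn.le)]
  exact IsProperShiftable.append_condFan hc hQ2 hj hsuit3 (R.lenEq_find hRfin) hsuit1 hRP2 hF3

/-- Proposition 3.4: attaching the maximal `α₂/β₂`-conditional fan at a `2`-suitable edge
`f²` of `P_c(z₂,α₂/β₂)` to the `c`-proper-shiftable chain `R⌢P²` yields a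
`c`-proper-shiftable chain. -/
theorem two_suitable_proper_shiftable {V : Type} (Δ : ℕ) (G : SimpleGraph V)
    (hdeg : DegreeBounded G Δ)
    (c : Sym2 V → Option (Fin (Δ + 1))) (hc : IsPartialColoring G Δ c)
    (e : Sym2 V) (he : e ∈ G.edgeSet) (hce : c e = none)
    (y₁ z₁ y₂ z₂ y₃ : V) (α₁ β₁ α₂ β₂ : Fin (Δ + 1))
    (F1 P1 F2 : EChain V)
    (hF1 : ∃ MF, IsMaxFan G c y₁ e MF ∧ F1.IsPrefix MF)
    (hP1 : ∃ Q, IsAltPath G c z₁ α₁ β₁ Q ∧ P1.IsPrefix Q)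
    (hF2 : ∃ f MF, IsMaxCondFan G c α₁ β₁ y₂ f MF ∧ F2.IsPrefix MF)
    (hF2last : ∃ n, F2.seq n = some s(y₂, z₂) ∧ F2.seq (n + 1) = none)
    (R : EChain V) (hR : R = F1.append (P1.append F2))
    (hRps : IsProperShiftable G Δ c R)
    (Q2 : EChain V) (hQ2 : IsAltPath G c z₂ α₂ β₂ Q2)
    (f₂ : Sym2 V) (j : ℕ) (hj : Q2.seq j = some f₂)
    (hsuit1 : ∀ g : Sym2 V, R.mem g → edgeDistGE G g f₂ 3)
    (hsuit2 : (Q2.seq (j + 1)).isSome)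
    (hsuit3 : c f₂ = some α₂)
    (P2 : EChain V) (hP2 : P2 = Q2.take j)
    (hy₃ : (Q2.take (j + 1)).IsLastVertexOf z₂ y₃)
    (hRP2 : IsProperShiftable G Δ c (R.append P2))
    (F3 : EChain V) (hF3 : IsMaxCondFan G c α₂ β₂ y₃ f₂ F3) :
    IsProperShiftable G Δ c (R.append (P2.append F3)) :=
  two_suitable_proper_shiftable_general Δ G c hc y₂ z₂ y₃ α₂ β₂ F1 P1 F2 hF2last R hR Q2 hQ2 f₂ j hj
    hsuit1 hsuit3 P2 hP2 hRP2 F3 hF3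
end

section
/- Let c be a partial coloring of a graph 𝒢 with maximum degree Δ, and let P be a c-augmenting chain with first edge e₀ ∈ U_c. Then there exists a partial proper edge coloring c': E ⇀ {1,…,Δ+1} with dom(c') = dom(c) ∪ {e₀} such that c'(f) = c(f) for every edge f not occurring in P. -/
open MeasureTheory
open scoped ENNReal

namespace EChain

variable {V : Type} {P : EChain V}

def IsLast (P : EChain V) (e : Sym2 V) : Prop := ∃ n, P.seq n = some e ∧ P.seq (n + 1) = none

theorem seq_eq_none_of_le_s16 {k m : ℕ} (hkm : k ≤ m) (hk : P.seq k = none) : P.seq m = none := by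
  induction m, hkm using Nat.le_induction with
  | base => exact hk
  | succ m _ ih => exact P.closed m ih

theorem IsLast.eq {e f : Sym2 V} (he : P.IsLast e) (hf : P.IsLast f) : e = f := by
  obtain ⟨m, hm, hm1⟩ := he
  obtain ⟨n, hn, hn1⟩ := hf
  have hle : ∀ {i j : ℕ} {g : Sym2 V}, P.seq i = some g → P.seq (j + 1) = none → i ≤ j :=
    fun hi hj => by
      by_contra! h
      simp [seq_eq_none_of_le_s16 h hj] at hi
  obtain rfl : m = n := le_antisymm (hle hm hn1) (hle hn hm1)
  exact Option.some_injective _ (hm.symm.trans hn)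

theorem not_isLast_of_infinite (hP : P.Infinite) (e : Sym2 V) : ¬ P.IsLast e := by
  rintro ⟨n, -, hn1⟩
  simpa [hn1] using hP (n + 1)

variable {Δ : ℕ} (c : Sym2 V → Option (Fin (Δ + 1)))

theorem shift_apply_of_seq_eq (hinj : P.EdgeInj) {f : Sym2 V} {m : ℕ} (hm : P.seq m = some f) :
    P.shift c f = (P.seq (m + 1)).bind c := by
  classical
  have h : ∃ n, P.seq n = some f := ⟨m, hm⟩
  rw [shift, dif_pos h, hinj _ _ _ (Nat.find_spec h) hm]

theorem shift_apply_of_not_mem {f : Sym2 V} (hf : ¬ P.mem f) : P.shift c f = c f := by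
  classical
  exact dif_neg hf

end EChain

theorem IsPartialColoring.update_of_mem_missing {V : Type} [DecidableEq (Sym2 V)]
    {G : SimpleGraph V} {Δ : ℕ} {c : Sym2 V → Option (Fin (Δ + 1))}
    (hc : IsPartialColoring G Δ c) {e : Sym2 V} (he : e ∈ G.edgeSet)
    {γ : Fin (Δ + 1)} (hγ : ∀ v ∈ e, γ ∈ missing G c v) :
    IsPartialColoring G Δ (Function.update c e (some γ)) := by
  have hfree : ∀ v ∈ e, ∀ f, v ∈ f → c f ≠ some γ := fun v hv f hvf hf =>
    hγ v hv f (hc.1 f (by simp [hf])) hvf hf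
  refine ⟨fun f hf => ?_, fun f g hfg ⟨v, hvf, hvg⟩ hf => ?_⟩
  · by_cases hfe : f = e
    · exact hfe ▸ he
    · exact hc.1 f (by rwa [Function.update_of_ne hfe] at hf)
  · by_cases hfe : f = e
    · subst hfe
      rw [Function.update_self, Function.update_of_ne (Ne.symm hfg)]
      exact (hfree v hvf g hvg).symm
    · rw [Function.update_of_ne hfe] at hf ⊢
      by_cases hge : g = e
      · subst hge
        rw [Function.update_self]
        exact hfree v hvg f hvf
      · rw [Function.update_of_ne hge]
        exact hc.2 f g hfg ⟨v, hvf, hvg⟩ hf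

namespace IsShiftable

variable {V : Type} {G : SimpleGraph V} {Δ : ℕ} {c : Sym2 V → Option (Fin (Δ + 1))}
  {P : EChain V} {e₀ : Sym2 V}

theorem eq_or_isSome_of_seq_eq (hP : IsShiftable G Δ c P) (hP0 : P.seq 0 = some e₀)
    {f : Sym2 V} {m : ℕ} (hm : P.seq m = some f) : f = e₀ ∨ (c f).isSome := by
  rcases m with _ | k
  · exact Or.inl (Option.some_injective _ (hm.symm.trans hP0))
  · exact Or.inr (hP.rest k f hm)

theorem isSome_shift_iff (hP : IsShiftable G Δ c P) (hP0 : P.seq 0 = some e₀) (f : Sym2 V) :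
    (P.shift c f).isSome ↔ (f = e₀ ∨ (c f).isSome) ∧ ¬ P.IsLast f := by
  by_cases hf : P.mem f
  · obtain ⟨m, hm⟩ := hf
    rw [P.shift_apply_of_seq_eq c hP.inj hm]
    have hlast : P.IsLast f ↔ P.seq (m + 1) = none := by
      refine ⟨fun ⟨n, hn, hn1⟩ => ?_, fun h => ⟨m, hm, h⟩⟩
      rwa [hP.inj _ _ _ hm hn]
    rw [hlast]
    rcases h : P.seq (m + 1) with _ | g
    · simp
    · rw [Option.bind_some]
      exact iff_of_true (hP.rest m g h) ⟨hP.eq_or_isSome_of_seq_eq hP0 hm, by simp⟩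
  · have hne : f ≠ e₀ := fun h => hf ⟨0, h ▸ hP0⟩
    have hnl : ¬ P.IsLast f := fun ⟨n, hn, _⟩ => hf ⟨n, hn⟩
    simp [P.shift_apply_of_not_mem c hf, hne, hnl]

end IsShiftable

theorem augment_along_chain_general {V : Type} (Δ : ℕ) (G : SimpleGraph V)
    (c : Sym2 V → Option (Fin (Δ + 1)))
    (P : EChain V) (e₀ : Sym2 V) (hP0 : P.seq 0 = some e₀)
    (haug : IsAugmenting G Δ c P) :
    ∃ c' : Sym2 V → Option (Fin (Δ + 1)), IsPartialColoring G Δ c' ∧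
      {e : Sym2 V | (c' e).isSome} = insert e₀ {e : Sym2 V | (c e).isSome} ∧
      ∀ f : Sym2 V, ¬ P.mem f → c' f = c f := by
  classical
  obtain ⟨⟨hshift, hprop⟩, hinf | ⟨n, e, hn, hn1, γ, hγ⟩⟩ := haug
  · refine ⟨P.shift c, hprop, ?_, fun f hf => P.shift_apply_of_not_mem c hf⟩
    ext f
    simp [hshift.isSome_shift_iff hP0, EChain.not_isLast_of_infinite hinf]
  · -- The last edge, uncolored by the shift, receives the common missing color `γ`.
    have hlast : P.IsLast e := ⟨n, hn, hn1⟩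
    refine ⟨Function.update (P.shift c) e (some γ),
      hprop.update_of_mem_missing (hshift.edges n e hn) hγ, ?_, fun f hf => ?_⟩
    · ext f
      by_cases hfe : f = e
      · subst hfe
        simpa using hshift.eq_or_isSome_of_seq_eq hP0 hn
      · have hnl : ¬ P.IsLast f := fun h => hfe (h.eq hlast)
        simp [Function.update_of_ne hfe, hshift.isSome_shift_iff hP0, hnl]
    · have hfe : f ≠ e := fun h => hf ⟨n, h ▸ hn⟩
      rw [Function.update_of_ne hfe, P.shift_apply_of_not_mem c hf]

/-- Augmenting along a `c`-augmenting chain: there is a proper partial coloring `c'` whose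
domain is `dom(c) ∪ {e₀}` and which agrees with `c` off the chain. -/
theorem augment_along_chain {V : Type} (Δ : ℕ) (G : SimpleGraph V)
    (hdeg : DegreeBounded G Δ)
    (c : Sym2 V → Option (Fin (Δ + 1))) (hc : IsPartialColoring G Δ c)
    (P : EChain V) (e₀ : Sym2 V) (hP0 : P.seq 0 = some e₀)
    (he₀ : e₀ ∈ G.edgeSet ∧ c e₀ = none)
    (haug : IsAugmenting G Δ c P) :
    ∃ c' : Sym2 V → Option (Fin (Δ + 1)), IsPartialColoring G Δ c' ∧
      {e : Sym2 V | (c' e).isSome} = insert e₀ {e : Sym2 V | (c e).isSome} ∧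
      ∀ f : Sym2 V, ¬ P.mem f → c' f = c f :=
  augment_along_chain_general Δ G c P e₀ hP0 haug
end
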